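/- Let G be a finite graph with a percolation measure, 0 a vertex and A = {a₁,a₂}. Set φ(i) := P(0↔aᵢ | a₁↮a₂), α := φ(1)/(φ(1)+φ(2)), β := φ(2)/(φ(1)+φ(2)) (assuming φ(1)+φ(2) > 0). Then for every vertex b, P(0↔b, 0↔A) ≥ α·P(0↔A, a₁↔b) + β·P(0↔A, a₂↔b). -/

import Mathlib

open scoped BigOperators

structure PercGraph (V E : Type) where
  ends : E → V × V
  p : E → ℝ

namespace PercGraph

variable {V E : Type} [DecidableEq V] [Fintype E] [DecidableEq E]

/-- Weight of a configuration: each edge `e` is open (`ω e = true`) with probability `p e`. -/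
def weight (G : PercGraph V E) (ω : E → Bool) : ℝ :=
  ∏ e, if ω e then G.p e else 1 - G.p e

/-- Probability of an event under the percolation measure. -/
noncomputable def prob (G : PercGraph V E) (S : Set (E → Bool)) : ℝ :=
  ∑ ω : E → Bool, Set.indicator S G.weight ω

/-- Expectation of a function under the percolation measure. -/
noncomputable def expec (G : PercGraph V E) (f : (E → Bool) → ℝ) : ℝ :=
  ∑ ω : E → Bool, f ω * G.weight ω

/-- Two vertices are adjacent via an open edge in configuration `ω`. -/
def adj (G : PercGraph V E) (ω : E → Bool) (x y : V) : Prop :=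
  ∃ e, ω e = true ∧ (G.ends e = (x, y) ∨ G.ends e = (y, x))

/-- `x` and `y` are connected by a path of open edges. -/
def Conn (G : PercGraph V E) (ω : E → Bool) (x y : V) : Prop :=
  Relation.ReflTransGen (G.adj ω) x y

/-- The union of the open clusters of the vertices of `A`. -/
def cluster (G : PercGraph V E) (ω : E → Bool) (A : Set V) : Set V :=
  {y | ∃ a ∈ A, G.Conn ω a y}

/-- The event `x ↔ y`. -/
def connEvent (G : PercGraph V E) (x y : V) : Set (E → Bool) :=
  {ω | G.Conn ω x y}

/-- The event `x ↔ A`. -/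
def connTo (G : PercGraph V E) (x : V) (A : Set V) : Set (E → Bool) :=
  {ω | ∃ a ∈ A, G.Conn ω x a}

/-- The event `A ↮ B`. -/
def disconn (G : PercGraph V E) (A B : Set V) : Set (E → Bool) :=
  {ω | ∀ a ∈ A, ∀ b ∈ B, ¬ G.Conn ω a b}

def IncreasingEvent (S : Set (E → Bool)) : Prop :=
  ∀ ⦃ω ω' : E → Bool⦄, (∀ e, ω e = true → ω' e = true) → ω ∈ S → ω' ∈ S

def DecreasingEvent (S : Set (E → Bool)) : Prop :=
  ∀ ⦃ω ω' : E → Bool⦄, (∀ e, ω e = true → ω' e = true) → ω' ∈ S → ω ∈ S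

def IncreasingFun (f : (E → Bool) → ℝ) : Prop :=
  ∀ ⦃ω ω' : E → Bool⦄, (∀ e, ω e = true → ω' e = true) → f ω ≤ f ω'

/-- `f` is determined by the cluster of `A`. -/
def ClusterDetermined (G : PercGraph V E) (A : Set V) (f : (E → Bool) → ℝ) : Prop :=
  ∀ ω ω', G.cluster ω A = G.cluster ω' A → f ω = f ω'

/-- The event `S` is determined by the cluster of `A`. -/
def ClusterDeterminedEvent (G : PercGraph V E) (A : Set V) (S : Set (E → Bool)) : Prop :=
  ∀ ω ω', G.cluster ω A = G.cluster ω' A → (ω ∈ S ↔ ω' ∈ S)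

noncomputable def condProb (G : PercGraph V E) (S T : Set (E → Bool)) : ℝ :=
  G.prob (S ∩ T) / G.prob T

noncomputable def condExpec (G : PercGraph V E) (f : (E → Bool) → ℝ) (T : Set (E → Bool)) : ℝ :=
  G.expec (T.indicator f) / G.prob T

/-- The edge `e` is incident to the vertex `x`. -/
def incident (G : PercGraph V E) (x : V) (e : E) : Prop :=
  (G.ends e).1 = x ∨ (G.ends e).2 = x

/-- The other endpoint of an edge incident to `x`. -/
def otherEnd (G : PercGraph V E) (x : V) (e : E) : V :=
  if (G.ends e).1 = x then (G.ends e).2 else (G.ends e).1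

/-- The graph `G ∖ W`: delete the vertices of `W` and all incident edges. -/
def delete (G : PercGraph V E) (W : Finset V) :
    PercGraph V {e : E // (G.ends e).1 ∉ W ∧ (G.ends e).2 ∉ W} :=
  ⟨fun e => G.ends e.1, fun e => G.p e.1⟩

/-- The graph `G` with the probability of edge `e` replaced by `q`. -/
def withEdgeProb (G : PercGraph V E) (e : E) (q : ℝ) : PercGraph V E :=
  ⟨G.ends, Function.update G.p e q⟩

/-- Contraction of the edge `e`: set its probability to 1. -/
def contract (G : PercGraph V E) (e : E) : PercGraph V E :=
  G.withEdgeProb e 1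

/-- The event that `e` is pivotal for `U`. -/
def pivotal (e : E) (U : Set (E → Bool)) : Set (E → Bool) :=
  {ω | ¬ ((Function.update ω e true ∈ U) ↔ (Function.update ω e false ∈ U))}

/-- All edge probabilities lie in `[0,1]`. -/
def ProbValid (G : PercGraph V E) : Prop := ∀ e, 0 ≤ G.p e ∧ G.p e ≤ 1


/-! ### Infrastructure -/

open Classical Set

set_option linter.unusedSectionVars false
set_option linter.dupNamespace false
set_option maxHeartbeats 1000000

section Infra

variable (G : PercGraph V E)

lemma prob_eq_sum (S : Set (E → Bool)) :
    G.prob S = ∑ ω : E → Bool, if ω ∈ S then G.weight ω else 0 := by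
  unfold prob
  refine Finset.sum_congr rfl (fun ω _ => ?_)
  by_cases h : ω ∈ S <;> simp [Set.indicator_apply, h]

lemma weight_nonneg (hG : G.ProbValid) (ω : E → Bool) : 0 ≤ G.weight ω := by
  refine Finset.prod_nonneg (fun e _ => ?_)
  rcases hG e with ⟨h0, h1⟩
  cases ω e <;> simp <;> linarith

lemma prob_nonneg (hG : G.ProbValid) (S : Set (E → Bool)) : 0 ≤ G.prob S := by
  rw [prob_eq_sum]
  refine Finset.sum_nonneg (fun ω _ => ?_)
  by_cases h : ω ∈ S <;> simp [h, G.weight_nonneg hG]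

lemma prob_mono (hG : G.ProbValid) {S T : Set (E → Bool)} (h : S ⊆ T) :
    G.prob S ≤ G.prob T := by
  rw [prob_eq_sum, prob_eq_sum]
  refine Finset.sum_le_sum (fun ω _ => ?_)
  by_cases hS : ω ∈ S
  · simp [hS, h hS]
  · by_cases hT : ω ∈ T <;> simp [hS, hT, G.weight_nonneg hG]

lemma prob_split (S T : Set (E → Bool)) :
    G.prob S = G.prob (S ∩ T) + G.prob (S \ T) := by
  rw [prob_eq_sum, prob_eq_sum, prob_eq_sum, ← Finset.sum_add_distrib]
  refine Finset.sum_congr rfl (fun ω _ => ?_)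
  by_cases hS : ω ∈ S <;> by_cases hT : ω ∈ T <;>
    simp [hS, hT, Set.mem_inter_iff, Set.mem_diff]

lemma single_le_prob (hG : G.ProbValid) {S : Set (E → Bool)} {ω₀ : E → Bool}
    (h : ω₀ ∈ S) : G.weight ω₀ ≤ G.prob S := by
  rw [prob_eq_sum]
  have h2 := Finset.single_le_sum
    (f := fun ω => if ω ∈ S then G.weight ω else 0)
    (fun ω _ => by by_cases h' : ω ∈ S <;> simp [h', G.weight_nonneg hG])
    (Finset.mem_univ ω₀)
  simpa [h] using h2

lemma prob_congr_support {S T : Set (E → Bool)}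
    (h : ∀ ω, G.weight ω ≠ 0 → (ω ∈ S ↔ ω ∈ T)) : G.prob S = G.prob T := by
  rw [prob_eq_sum, prob_eq_sum]
  refine Finset.sum_congr rfl (fun ω _ => ?_)
  by_cases hw : G.weight ω = 0
  · by_cases hS : ω ∈ S <;> by_cases hT : ω ∈ T <;> simp [hS, hT, hw]
  · by_cases hS : ω ∈ S
    · simp [hS, (h ω hw).mp hS]
    · have : ω ∉ T := fun hT => hS ((h ω hw).mpr hT)
      simp [hS, this]

lemma prob_zero_of_support {S : Set (E → Bool)}
    (h : ∀ ω, G.weight ω ≠ 0 → ω ∉ S) : G.prob S = 0 := by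
  have h2 : G.prob S = G.prob (∅ : Set (E → Bool)) :=
    G.prob_congr_support (fun ω hw => by simp [h ω hw])
  rw [h2, prob_eq_sum]
  simp

lemma weight_decomp (e : E) (ω : E → Bool) (q : ℝ) :
    (G.withEdgeProb e q).weight ω
      = (if ω e then q else 1 - q) *
        ∏ f ∈ Finset.univ.erase e, (if ω f then G.p f else 1 - G.p f) := by
  rw [weight, ← Finset.mul_prod_erase _ _ (Finset.mem_univ e)]
  congr 1
  · simp [withEdgeProb]
  · refine Finset.prod_congr rfl (fun f hf => ?_)
    simp [withEdgeProb, Function.update_of_ne (Finset.ne_of_mem_erase hf)]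

lemma weight_self_decomp (e : E) (ω : E → Bool) :
    G.weight ω
      = (if ω e then G.p e else 1 - G.p e) *
        ∏ f ∈ Finset.univ.erase e, (if ω f then G.p f else 1 - G.p f) := by
  rw [weight, ← Finset.mul_prod_erase _ _ (Finset.mem_univ e)]

lemma weight_pin (e : E) (ω : E → Bool) :
    G.weight ω = G.p e * ((G.withEdgeProb e 1).weight ω)
      + (1 - G.p e) * ((G.withEdgeProb e 0).weight ω) := by
  rw [weight_self_decomp G e, weight_decomp G e, weight_decomp G e]
  cases hωe : ω e <;> simp [hωe] <;> ring

lemma prob_pin (e : E) (S : Set (E → Bool)) :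
    G.prob S = G.p e * (G.withEdgeProb e 1).prob S
      + (1 - G.p e) * (G.withEdgeProb e 0).prob S := by
  rw [prob_eq_sum, prob_eq_sum, prob_eq_sum, Finset.mul_sum, Finset.mul_sum,
    ← Finset.sum_add_distrib]
  refine Finset.sum_congr rfl (fun ω _ => ?_)
  by_cases hS : ω ∈ S
  · simp only [hS, if_true]; exact G.weight_pin e ω
  · simp [hS]

lemma valid_withEdgeProb (hG : G.ProbValid) (e : E) {q : ℝ} (h0 : 0 ≤ q) (h1 : q ≤ 1) :
    (G.withEdgeProb e q).ProbValid := by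
  intro f
  by_cases hf : f = e
  · subst hf; simp [withEdgeProb, h0, h1]
  · simpa [withEdgeProb, Function.update_of_ne hf] using hG f

lemma omega_true_of_pone {e : E} (h : G.p e = 1) {ω : E → Bool}
    (hw : G.weight ω ≠ 0) : ω e = true := by
  by_contra hfalse
  apply hw
  refine Finset.prod_eq_zero (Finset.mem_univ e) ?_
  simp at hfalse
  simp [hfalse, h]

lemma omega_false_of_pzero {e : E} (h : G.p e = 0) {ω : E → Bool}
    (hw : G.weight ω ≠ 0) : ω e = false := by
  by_contra htrue
  apply hw
  refine Finset.prod_eq_zero (Finset.mem_univ e) ?_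
  simp at htrue
  simp [htrue, h]

end Infra

/-- Number of "free" (non-deterministic) edges. -/
noncomputable def freeC (G : PercGraph V E) : ℕ :=
  (Finset.univ.filter (fun e => G.p e ≠ 0 ∧ G.p e ≠ 1)).card

lemma freeC_pin_lt (G : PercGraph V E) {e : E} (he : G.p e ≠ 0 ∧ G.p e ≠ 1)
    {q : ℝ} (hq : q = 0 ∨ q = 1) :
    freeC (G.withEdgeProb e q) < freeC G := by
  apply Finset.card_lt_card
  constructor
  · intro f hf
    simp only [Finset.mem_filter, Finset.mem_univ, true_and] at hf ⊢
    by_cases hfe : f = e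
    · subst hfe
      exfalso
      simp only [withEdgeProb, Function.update_self] at hf
      rcases hq with h | h <;> simp [h] at hf
    · simpa [withEdgeProb, Function.update_of_ne hfe] using hf
  · intro hsub
    have he' : e ∈ Finset.univ.filter (fun f => G.p f ≠ 0 ∧ G.p f ≠ 1) := by
      simp [Finset.mem_filter, he.1, he.2]
    have := hsub he'
    simp only [Finset.mem_filter, Finset.mem_univ, true_and, withEdgeProb,
      Function.update_self] at this
    rcases hq with h | h <;> simp [h] at this

/-- The minimal supported configuration: exactly the `p = 1` edges are open. -/
noncomputable def omegaStar (G : PercGraph V E) : E → Bool :=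
  fun e => if G.p e = 1 then true else false

lemma omegaStar_le_support (G : PercGraph V E) {ω : E → Bool}
    (hw : G.weight ω ≠ 0) : ∀ e, G.omegaStar e = true → ω e = true := by
  intro e he
  simp only [omegaStar] at he
  by_cases h1 : G.p e = 1
  · exact G.omega_true_of_pone h1 hw
  · simp [h1] at he

lemma prob_univ_eq_one (G : PercGraph V E) (hG : G.ProbValid) :
    G.prob Set.univ = 1 := by
  generalize hn : G.freeC = n
  induction n using Nat.strong_induction_on generalizing G with
  | _ n ih =>
  by_cases hfree : ∃ e, G.p e ≠ 0 ∧ G.p e ≠ 1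
  · obtain ⟨e, he⟩ := hfree
    have h1 : (G.withEdgeProb e 1).prob Set.univ = 1 :=
      ih _ (hn ▸ G.freeC_pin_lt he (Or.inr rfl)) _
        (G.valid_withEdgeProb hG e zero_le_one le_rfl) rfl
    have h0 : (G.withEdgeProb e 0).prob Set.univ = 1 :=
      ih _ (hn ▸ G.freeC_pin_lt he (Or.inl rfl)) _
        (G.valid_withEdgeProb hG e le_rfl zero_le_one) rfl
    rw [G.prob_pin e, h1, h0]; ring
  · push_neg at hfree
    rw [prob_eq_sum]
    simp only [Set.mem_univ, if_true]
    have hstar : G.weight (G.omegaStar) = 1 := by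
      refine Finset.prod_eq_one (fun e _ => ?_)
      by_cases h1 : G.p e = 1
      · simp [omegaStar, h1]
      · have h0 : G.p e = 0 := by
          by_contra h0; exact h1 (hfree e h0)
        simp [omegaStar, h1, h0]
    have hother : ∀ ω, ω ≠ G.omegaStar → G.weight ω = 0 := by
      intro ω hne
      have : ∃ e, ω e ≠ G.omegaStar e := by
        by_contra hc; push_neg at hc; exact hne (funext hc)
      obtain ⟨e, he⟩ := this
      refine Finset.prod_eq_zero (Finset.mem_univ e) ?_
      by_cases h1 : G.p e = 1
      · have hs : G.omegaStar e = true := by simp [omegaStar, h1]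
        rw [hs] at he
        have hωe : ω e = false := by
          cases hω : ω e
          · rfl
          · exact absurd hω he
        simp [hωe, h1]
      · have h0 : G.p e = 0 := by by_contra h0; exact h1 (hfree e h0)
        have hs : G.omegaStar e = false := by simp [omegaStar, h1]
        rw [hs] at he
        have hωe : ω e = true := by
          cases hω : ω e
          · exfalso; exact he (by rw [hω])
          · rfl
        simp [hωe, h0]
    rw [Finset.sum_eq_single G.omegaStar (fun ω _ hne => hother ω hne) (by simp)]
    exact hstar


/-! ### Cluster lemmas -/

section Cluster

variable (G : PercGraph V E)

@[simp] lemma withEdgeProb_ends (e : E) (q : ℝ) : (G.withEdgeProb e q).ends = G.ends := rfl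

@[simp] lemma withEdgeProb_cluster (e : E) (q : ℝ) (ω : E → Bool) (K : Set V) :
    (G.withEdgeProb e q).cluster ω K = G.cluster ω K := rfl

@[simp] lemma withEdgeProb_p_same (e : E) (q : ℝ) : (G.withEdgeProb e q).p e = q := by
  simp [withEdgeProb]

lemma adj_symm {ω : E → Bool} {x y : V} (h : G.adj ω x y) : G.adj ω y x := by
  obtain ⟨e, he, hends⟩ := h
  exact ⟨e, he, hends.symm⟩

lemma conn_symm {ω : E → Bool} {x y : V} (h : G.Conn ω x y) : G.Conn ω y x := by
  induction h with
  | refl => exact Relation.ReflTransGen.refl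
  | tail _ hadj ih =>
      exact Relation.ReflTransGen.head (G.adj_symm hadj) ih

lemma conn_trans {ω : E → Bool} {x y z : V} (h : G.Conn ω x y) (h' : G.Conn ω y z) :
    G.Conn ω x z := Relation.ReflTransGen.trans h h'

lemma subset_cluster (ω : E → Bool) (K : Set V) : K ⊆ G.cluster ω K :=
  fun a ha => ⟨a, ha, Relation.ReflTransGen.refl⟩

lemma cluster_mono_seed {K K' : Set V} (h : K ⊆ K') (ω : E → Bool) :
    G.cluster ω K ⊆ G.cluster ω K' := by
  rintro y ⟨a, ha, hc⟩
  exact ⟨a, h ha, hc⟩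

lemma cluster_union (ω : E → Bool) (K K' : Set V) :
    G.cluster ω (K ∪ K') = G.cluster ω K ∪ G.cluster ω K' := by
  ext y
  constructor
  · rintro ⟨a, ha | ha, hc⟩
    · exact Or.inl ⟨a, ha, hc⟩
    · exact Or.inr ⟨a, ha, hc⟩
  · rintro (⟨a, ha, hc⟩ | ⟨a, ha, hc⟩)
    · exact ⟨a, Or.inl ha, hc⟩
    · exact ⟨a, Or.inr ha, hc⟩

lemma cluster_conn_closed {ω : E → Bool} {K : Set V} {y v : V}
    (hy : y ∈ G.cluster ω K) (h : G.Conn ω y v) : v ∈ G.cluster ω K := by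
  obtain ⟨a, ha, hc⟩ := hy
  exact ⟨a, ha, G.conn_trans hc h⟩

lemma cluster_seed_absorb {ω : E → Bool} {K : Set V} {v : V}
    (hv : v ∈ G.cluster ω K) : G.cluster ω (K ∪ {v}) = G.cluster ω K := by
  rw [cluster_union]
  apply Set.union_eq_self_of_subset_right
  rintro y ⟨a, ha, hc⟩
  rcases ha with rfl
  exact G.cluster_conn_closed hv hc

lemma mem_cluster_of_open_edge {ω : E → Bool} {K : Set V} {e : E} {x v : V}
    (he : ω e = true) (hor : G.ends e = (x, v) ∨ G.ends e = (v, x)) (hx : x ∈ K) :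
    v ∈ G.cluster ω K :=
  ⟨x, hx, Relation.ReflTransGen.single ⟨e, he, hor⟩⟩

lemma cluster_extend_open {ω : E → Bool} {K : Set V} {e : E} {x v : V}
    (he : ω e = true) (hor : G.ends e = (x, v) ∨ G.ends e = (v, x)) (hx : x ∈ K) :
    G.cluster ω (K ∪ {v}) = G.cluster ω K :=
  G.cluster_seed_absorb (G.mem_cluster_of_open_edge he hor hx)

lemma cluster_no_escape {ω : E → Bool} {K : Set V}
    (h : ∀ e, ω e = true → (((G.ends e).1 ∈ K) ↔ ((G.ends e).2 ∈ K))) :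
    G.cluster ω K = K := by
  apply Set.Subset.antisymm _ (G.subset_cluster ω K)
  rintro y ⟨a, ha, hc⟩
  induction hc with
  | refl => exact ha
  | tail _ hadj ih =>
      obtain ⟨e, he, hor⟩ := hadj
      rcases hor with hor | hor
      · have := h e he
        rw [hor] at this
        exact this.mp ih
      · have := h e he
        rw [hor] at this
        exact this.mpr ih

lemma cluster_mono_config {ω ω' : E → Bool} (h : ∀ e, ω e = true → ω' e = true)
    (K : Set V) : G.cluster ω K ⊆ G.cluster ω' K := by
  rintro y ⟨a, ha, hc⟩
  refine ⟨a, ha, ?_⟩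
  induction hc with
  | refl => exact Relation.ReflTransGen.refl
  | tail _ hadj ih =>
      obtain ⟨e, he, hor⟩ := hadj
      exact Relation.ReflTransGen.tail ih ⟨e, h e he, hor⟩

lemma cluster_update_true_of_not_mem {ω : E → Bool} {K : Set V} {e : E}
    (h1 : (G.ends e).1 ∉ G.cluster ω K) (h2 : (G.ends e).2 ∉ G.cluster ω K) :
    G.cluster (Function.update ω e true) K = G.cluster ω K := by
  apply Set.Subset.antisymm
  · rintro y ⟨a, ha, hc⟩
    induction hc with
    | refl => exact G.subset_cluster ω K ha
    | tail _ hadj ih =>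
        obtain ⟨f, hf, hor⟩ := hadj
        by_cases hfe : f = e
        · subst hfe
          exfalso
          rcases hor with hor | hor
          · exact h1 (by rw [hor]; exact ih)
          · exact h2 (by rw [hor]; exact ih)
        · rw [Function.update_of_ne hfe] at hf
          exact G.cluster_conn_closed ih (Relation.ReflTransGen.single ⟨f, hf, hor⟩)
  · exact G.cluster_mono_config (fun f hf => by
      by_cases hfe : f = e
      · subst hfe; simp
      · rwa [Function.update_of_ne hfe]) K

lemma cluster_update_of_endpoints_seed {ω : E → Bool} {K : Set V} {e : E}
    (h1 : (G.ends e).1 ∈ K) (h2 : (G.ends e).2 ∈ K) (b : Bool) :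
    G.cluster (Function.update ω e b) K = G.cluster ω K := by
  have key : ∀ (σ : E → Bool), G.cluster (Function.update σ e true) K = G.cluster σ K := by
    intro σ
    apply Set.Subset.antisymm
    · rintro y ⟨a, ha, hc⟩
      induction hc with
      | refl => exact G.subset_cluster σ K ha
      | tail _ hadj ih =>
          obtain ⟨f, hf, hor⟩ := hadj
          by_cases hfe : f = e
          · subst hfe
            rcases hor with hor | hor
            · exact G.subset_cluster σ K (by rw [hor] at h2; exact h2)
            · exact G.subset_cluster σ K (by rw [hor] at h1; exact h1)
          · rw [Function.update_of_ne hfe] at hf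
            exact G.cluster_conn_closed ih (Relation.ReflTransGen.single ⟨f, hf, hor⟩)
    · exact G.cluster_mono_config (fun f hf => by
        by_cases hfe : f = e
        · subst hfe; simp
        · rwa [Function.update_of_ne hfe]) K
  cases b
  · -- b = false
    by_cases hωe : ω e = true
    · have hω : Function.update (Function.update ω e false) e true = ω := by
        funext f
        by_cases hfe : f = e
        · subst hfe; simp [hωe]
        · simp [Function.update_of_ne hfe]
      calc G.cluster (Function.update ω e false) K
          = G.cluster (Function.update (Function.update ω e false) e true) K := (key _).symm
        _ = G.cluster ω K := by rw [hω]
    · have hω : Function.update ω e false = ω := by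
        funext f
        by_cases hfe : f = e
        · subst hfe; simp at hωe; simp [hωe]
        · simp [Function.update_of_ne hfe]
      rw [hω]
  · -- b = true
    exact key ω

lemma cluster_disjoint_symm (ω : E → Bool) (K S : Set V) :
    G.cluster ω K ∩ S = ∅ ↔ G.cluster ω S ∩ K = ∅ := by
  have key : ∀ (A B : Set V), G.cluster ω A ∩ B = ∅ ↔ ∀ a ∈ A, ∀ b ∈ B, ¬ G.Conn ω a b := by
    intro A B
    rw [Set.eq_empty_iff_forall_notMem]
    constructor
    · intro h a ha b hb hc
      exact h b ⟨⟨a, ha, hc⟩, hb⟩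
    · rintro h y ⟨⟨a, ha, hc⟩, hy⟩
      exact h a ha y hy hc
  rw [key, key]
  constructor
  · intro h s hs k hk hc
    exact h k hk s hs (G.conn_symm hc)
  · intro h k hk s hs hc
    exact h s hs k hk (G.conn_symm hc)

end Cluster

/-! ### The flip lemma -/

section Flip

variable (G : PercGraph V E)

lemma weight_one_flip (e : E) (ω : E → Bool) :
    (G.withEdgeProb e 1).weight (Function.update ω e (!ω e))
      = (G.withEdgeProb e 0).weight ω := by
  rw [weight_decomp, weight_decomp]
  congr 1
  · simp only [Function.update_self]
    cases hωe : ω e <;> simp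
  · refine Finset.prod_congr rfl (fun f hf => ?_)
    rw [Function.update_of_ne (Finset.ne_of_mem_erase hf)]

lemma prob_flip (e : E) (X : Set (E → Bool))
    (hind : ∀ ω b, ω ∈ X ↔ Function.update ω e b ∈ X) :
    (G.withEdgeProb e 1).prob X = (G.withEdgeProb e 0).prob X := by
  rw [prob_eq_sum, prob_eq_sum]
  have hbij : Function.Bijective (fun ω : E → Bool => Function.update ω e (!ω e)) := by
    have hinv : Function.Involutive (fun ω : E → Bool => Function.update ω e (!ω e)) := by
      intro ω
      funext f
      by_cases hfe : f = e
      · subst hfe; simp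
      · simp [Function.update_of_ne hfe]
    exact hinv.bijective
  rw [← Function.Bijective.sum_comp hbij
    (fun ω => if ω ∈ X then (G.withEdgeProb e 1).weight ω else 0)]
  refine Finset.sum_congr rfl (fun ω _ => ?_)
  have hmem : (Function.update ω e (!ω e) ∈ X) ↔ (ω ∈ X) := (hind ω (!ω e)).symm
  by_cases hX : ω ∈ X
  · simp only [hmem.mpr hX, hX, if_true]
    exact G.weight_one_flip e ω
  · have hX2 : Function.update ω e (!ω e) ∉ X := fun h => hX (hmem.mp h)
    simp [hX, hX2]

end Flip

/-! ### The Q and NQ quantities -/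

/-- Up-closed family of vertex sets. -/
def UpFam (F : Set (Set V)) : Prop := ∀ ⦃s t : Set V⦄, s ⊆ t → s ∈ F → t ∈ F

lemma upFam_univ : UpFam (Set.univ : Set (Set V)) := fun _ _ _ _ => Set.mem_univ _

lemma upFam_inter {F F' : Set (Set V)} (h : UpFam F) (h' : UpFam F') : UpFam (F ∩ F') :=
  fun s t hst hs => ⟨h hst hs.1, h' hst hs.2⟩

lemma upFam_mem (y : V) : UpFam {T : Set V | y ∈ T} := fun s t hst hs => hst hs

lemma upFam_nonempty_inter (W : Set V) : UpFam {T : Set V | (T ∩ W).Nonempty} := by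
  rintro s t hst ⟨x, hx⟩
  exact ⟨x, hst hx.1, hx.2⟩

/-- Probability that the cluster of `K` lies in the family `F` and avoids `S`. -/
noncomputable def Q (G : PercGraph V E) (K S : Set V) (F : Set (Set V)) : ℝ :=
  G.prob {ω | G.cluster ω K ∈ F ∧ G.cluster ω K ∩ S = ∅}

/-- Two-seed quantity for the mixed negative-correlation statement. -/
noncomputable def NQ (G : PercGraph V E) (K₁ K₂ : Set V) (F₁ F₂ : Set (Set V)) : ℝ :=
  G.prob {ω | G.cluster ω K₁ ∈ F₁ ∧ G.cluster ω K₂ ∈ F₂ ∧ G.cluster ω K₁ ∩ K₂ = ∅}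

section QBasic

variable (G : PercGraph V E)

lemma Q_nonneg (hG : G.ProbValid) (K S : Set V) (F : Set (Set V)) : 0 ≤ G.Q K S F :=
  G.prob_nonneg hG _

lemma Q_le_B (hG : G.ProbValid) (K S : Set V) (F : Set (Set V)) :
    G.Q K S F ≤ G.Q K S Set.univ :=
  G.prob_mono hG (fun ω hω => ⟨Set.mem_univ _, hω.2⟩)

lemma Q_mono_avoid (hG : G.ProbValid) (K : Set V) {S S' : Set V} (h : S ⊆ S')
    (F : Set (Set V)) : G.Q K S' F ≤ G.Q K S F := by
  refine G.prob_mono hG (fun ω hω => ?_)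
  obtain ⟨hF, hS⟩ := hω
  refine ⟨hF, ?_⟩
  rw [Set.eq_empty_iff_forall_notMem] at hS ⊢
  exact fun v hv => hS v ⟨hv.1, h hv.2⟩

lemma B_mono_seed (hG : G.ProbValid) {K K' : Set V} (h : K ⊆ K') (S : Set V) :
    G.Q K' S Set.univ ≤ G.Q K S Set.univ := by
  refine G.prob_mono hG (fun ω hω => ?_)
  obtain ⟨-, hS⟩ := hω
  refine ⟨Set.mem_univ _, ?_⟩
  rw [Set.eq_empty_iff_forall_notMem] at hS ⊢
  exact fun v hv => hS v ⟨G.cluster_mono_seed h ω hv.1, hv.2⟩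

lemma Q_split_mem (K S : Set V) (y : V) (F : Set (Set V)) :
    G.Q K S F = G.Q K S (F ∩ {T | y ∈ T}) + G.Q K (S ∪ {y}) F := by
  unfold Q
  rw [G.prob_split _ {ω | y ∈ G.cluster ω K}]
  congr 1
  · apply congrArg
    ext ω
    simp only [Set.mem_inter_iff, Set.mem_setOf_eq]
    tauto
  · apply congrArg
    ext ω
    simp only [Set.mem_diff, Set.mem_setOf_eq]
    constructor
    · rintro ⟨⟨hF, hS⟩, hy⟩
      refine ⟨hF, ?_⟩
      rw [Set.eq_empty_iff_forall_notMem] at hS ⊢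
      rintro v ⟨hv, hvS | hvy⟩
      · exact hS v ⟨hv, hvS⟩
      · rcases hvy with rfl; exact hy hv
    · rintro ⟨hF, hS⟩
      rw [Set.eq_empty_iff_forall_notMem] at hS
      refine ⟨⟨hF, ?_⟩, fun hy => hS y ⟨hy, Or.inr rfl⟩⟩
      rw [Set.eq_empty_iff_forall_notMem]
      exact fun v hv => hS v ⟨hv.1, Or.inl hv.2⟩

lemma Q_zero_of_inter (hK : (K ∩ S : Set V).Nonempty) (F : Set (Set V)) :
    G.Q K S F = 0 := by
  unfold Q
  have : {ω | G.cluster ω K ∈ F ∧ G.cluster ω K ∩ S = ∅} = (∅ : Set (E → Bool)) := by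
    ext ω
    simp only [Set.mem_setOf_eq, Set.mem_empty_iff_false, iff_false, not_and]
    intro _
    obtain ⟨v, hvK, hvS⟩ := hK
    rw [Set.eq_empty_iff_forall_notMem]
    intro h
    exact h v ⟨G.subset_cluster ω K hvK, hvS⟩
  rw [this, prob_eq_sum]
  simp

lemma Q_symm_univ (K S : Set V) : G.Q K S Set.univ = G.Q S K Set.univ := by
  unfold Q
  apply congrArg
  ext ω
  simp only [Set.mem_setOf_eq, Set.mem_univ, true_and]
  exact G.cluster_disjoint_symm ω K S

lemma B_union_avoid (K W S : Set V) :
    G.Q (K ∪ W) S Set.univ = G.Q S K {T | T ∩ W = ∅} := by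
  unfold Q
  apply congrArg
  ext ω
  simp only [Set.mem_setOf_eq, Set.mem_univ, true_and]
  rw [G.cluster_disjoint_symm ω (K ∪ W) S]
  constructor
  · intro h
    rw [Set.eq_empty_iff_forall_notMem] at h
    constructor
    · rw [Set.eq_empty_iff_forall_notMem]
      exact fun v hv => h v ⟨hv.1, Or.inr hv.2⟩
    · rw [Set.eq_empty_iff_forall_notMem]
      exact fun v hv => h v ⟨hv.1, Or.inl hv.2⟩
  · rintro ⟨hW, hK⟩
    rw [Set.eq_empty_iff_forall_notMem] at hW hK ⊢
    rintro v ⟨hv, hvK | hvW⟩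
    · exact hK v ⟨hv, hvK⟩
    · exact hW v ⟨hv, hvW⟩

lemma NQ_one_univ (K₁ K₂ : Set V) (F : Set (Set V)) :
    G.NQ K₁ K₂ F Set.univ = G.Q K₁ K₂ F := by
  unfold NQ Q
  apply congrArg
  ext ω
  simp only [Set.mem_setOf_eq, Set.mem_univ, true_and]

lemma NQ_two_univ (K₁ K₂ : Set V) (F : Set (Set V)) :
    G.NQ K₁ K₂ Set.univ F = G.Q K₂ K₁ F := by
  unfold NQ Q
  apply congrArg
  ext ω
  simp only [Set.mem_setOf_eq, Set.mem_univ, true_and]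
  rw [G.cluster_disjoint_symm ω K₁ K₂]

lemma NQ_univ_univ (K₁ K₂ : Set V) :
    G.NQ K₁ K₂ Set.univ Set.univ = G.Q K₁ K₂ Set.univ := by
  rw [NQ_one_univ]

lemma NQ_nonneg (hG : G.ProbValid) (K₁ K₂ : Set V) (F₁ F₂ : Set (Set V)) :
    0 ≤ G.NQ K₁ K₂ F₁ F₂ := G.prob_nonneg hG _

lemma NQ_le (hG : G.ProbValid) (K₁ K₂ : Set V) (F₁ F₂ : Set (Set V)) :
    G.NQ K₁ K₂ F₁ F₂ ≤ G.NQ K₁ K₂ Set.univ Set.univ :=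
  G.prob_mono hG (fun ω hω => ⟨Set.mem_univ _, Set.mem_univ _, hω.2.2⟩)

end QBasic

/-! ### Statement forms -/

/-- Conditional positive association for the cluster of `K` avoiding `S`. -/
def CPAat (G : PercGraph V E) (K S : Set V) : Prop :=
  ∀ F₁ F₂ : Set (Set V), UpFam F₁ → UpFam F₂ →
    G.Q K S F₁ * G.Q K S F₂ ≤ G.Q K S (F₁ ∩ F₂) * G.Q K S Set.univ

/-- Conditional monotonicity in the seed. -/
def MonAat (G : PercGraph V E) (K K' S : Set V) : Prop :=
  ∀ F : Set (Set V), UpFam F →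
    G.Q K S F * G.Q K' S Set.univ ≤ G.Q K' S F * G.Q K S Set.univ

/-- Conditional negative correlation between the two clusters. -/
def NAat (G : PercGraph V E) (K₁ K₂ : Set V) : Prop :=
  ∀ F₁ F₂ : Set (Set V), UpFam F₁ → UpFam F₂ →
    G.NQ K₁ K₂ F₁ F₂ * G.NQ K₁ K₂ Set.univ Set.univ ≤
      G.NQ K₁ K₂ F₁ Set.univ * G.NQ K₁ K₂ Set.univ F₂

section Derived

variable (G : PercGraph V E)

lemma Q_split_fam (K S : Set V) (F B : Set (Set V)) :
    G.Q K S F = G.Q K S (F ∩ B) + G.Q K S (F ∩ Bᶜ) := by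
  unfold Q
  rw [G.prob_split _ {ω | G.cluster ω K ∈ B}]
  congr 1
  · apply congrArg; ext ω
    simp only [Set.mem_inter_iff, Set.mem_setOf_eq]; tauto
  · apply congrArg; ext ω
    simp only [Set.mem_diff, Set.mem_setOf_eq, Set.mem_inter_iff, Set.mem_compl_iff]; tauto

/-- MonZ : conditioned on avoiding more, up-events become less likely.  Derived from CPA
on the same graph. -/
lemma monZ_of_cpa {K S : Set V} (cpa : CPAat G K S) (y : V) {F : Set (Set V)}
    (hF : UpFam F) :
    G.Q K (S ∪ {y}) F * G.Q K S Set.univ ≤ G.Q K S F * G.Q K (S ∪ {y}) Set.univ := by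
  have h1 := G.Q_split_mem K S y F
  have h2 := G.Q_split_mem K S y Set.univ
  rw [Set.univ_inter] at h2
  have hc := cpa F {T | y ∈ T} hF (upFam_mem y)
  have eA : G.Q K (S ∪ {y}) F = G.Q K S F - G.Q K S (F ∩ {T | y ∈ T}) := by linarith
  have eB : G.Q K (S ∪ {y}) Set.univ = G.Q K S Set.univ - G.Q K S {T | y ∈ T} := by linarith
  rw [eA, eB]
  nlinarith [hc]

/-- PX : the avoidance-penalty ratio is monotone in the seed.  Derived from MonA. -/
lemma px_of_monA {K K' S : Set V} (mon : MonAat G K K' S) (v : V) :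
    G.Q K' (S ∪ {v}) Set.univ * G.Q K S Set.univ ≤
      G.Q K' S Set.univ * G.Q K (S ∪ {v}) Set.univ := by
  have h1 := G.Q_split_mem K S v Set.univ
  have h2 := G.Q_split_mem K' S v Set.univ
  rw [Set.univ_inter] at h1 h2
  have hm := mon {T | v ∈ T} (upFam_mem v)
  have eA : G.Q K (S ∪ {v}) Set.univ = G.Q K S Set.univ - G.Q K S {T | v ∈ T} := by linarith
  have eB : G.Q K' (S ∪ {v}) Set.univ = G.Q K' S Set.univ - G.Q K' S {T | v ∈ T} := by
    linarith
  rw [eA, eB]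
  nlinarith [hm]

/-- Down-event version of CPA. -/
lemma cpa_down {K S : Set V} (cpa : CPAat G K S) {F₁ F₂ : Set (Set V)}
    (h₁ : UpFam F₁) (h₂ : UpFam F₂) :
    G.Q K S F₁ᶜ * G.Q K S F₂ᶜ ≤ G.Q K S (F₁ᶜ ∩ F₂ᶜ) * G.Q K S Set.univ := by
  have e1 : G.Q K S Set.univ = G.Q K S F₁ + G.Q K S F₁ᶜ := by
    have := G.Q_split_fam K S Set.univ F₁
    rwa [Set.univ_inter, Set.univ_inter] at this
  have e2 : G.Q K S F₂ = G.Q K S (F₂ ∩ F₁) + G.Q K S (F₂ ∩ F₁ᶜ) := G.Q_split_fam K S F₂ F₁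
  have e3 : G.Q K S F₁ᶜ = G.Q K S (F₁ᶜ ∩ F₂) + G.Q K S (F₁ᶜ ∩ F₂ᶜ) := by
    have := G.Q_split_fam K S F₁ᶜ F₂
    exact this
  have e4 : G.Q K S Set.univ = G.Q K S F₂ + G.Q K S F₂ᶜ := by
    have := G.Q_split_fam K S Set.univ F₂
    rwa [Set.univ_inter, Set.univ_inter] at this
  have ecomm : G.Q K S (F₂ ∩ F₁ᶜ) = G.Q K S (F₁ᶜ ∩ F₂) := by rw [Set.inter_comm]
  have ecomm2 : G.Q K S (F₂ ∩ F₁) = G.Q K S (F₁ ∩ F₂) := by rw [Set.inter_comm]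
  have hc := cpa F₁ F₂ h₁ h₂
  have f1 : G.Q K S F₁ᶜ = G.Q K S Set.univ - G.Q K S F₁ := by linarith
  have f2 : G.Q K S F₂ᶜ = G.Q K S Set.univ - G.Q K S F₂ := by linarith
  have f3 : G.Q K S (F₁ᶜ ∩ F₂ᶜ) = G.Q K S Set.univ - G.Q K S F₁
      - (G.Q K S F₂ - G.Q K S (F₁ ∩ F₂)) := by linarith
  rw [f1, f2, f3]
  nlinarith [hc]

/-- P2 : supermodularity of the avoidance probability in the seed. -/
lemma p2_of_cpa {K K' S : Set V} (hKK' : K ⊆ K') (cpa : CPAat G S K) (v : V) :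
    G.Q K' S Set.univ * G.Q (K ∪ {v}) S Set.univ ≤
      G.Q (K' ∪ {v}) S Set.univ * G.Q K S Set.univ := by
  set W : Set V := K' \ K with hW
  have hKW : K ∪ W = K' := Set.union_diff_cancel hKK'
  have c1 : ∀ A : Set V, {T : Set V | T ∩ A = ∅} = {T : Set V | (T ∩ A).Nonempty}ᶜ := by
    intro A; ext T
    simp [Set.not_nonempty_iff_eq_empty]
  have t1 : G.Q K' S Set.univ = G.Q S K {T : Set V | (T ∩ W).Nonempty}ᶜ := by
    rw [← hKW, G.B_union_avoid, c1]
  have t2 : G.Q (K ∪ {v}) S Set.univ = G.Q S K {T : Set V | (T ∩ {v}).Nonempty}ᶜ := by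
    rw [G.B_union_avoid, c1]
  have t3 : G.Q (K' ∪ {v}) S Set.univ
      = G.Q S K ({T : Set V | (T ∩ W).Nonempty}ᶜ ∩ {T : Set V | (T ∩ {v}).Nonempty}ᶜ) := by
    have : K' ∪ {v} = K ∪ (W ∪ {v}) := by rw [← hKW, Set.union_assoc]
    rw [this, G.B_union_avoid]
    apply congrArg
    ext T
    simp only [Set.mem_setOf_eq, Set.mem_inter_iff, Set.mem_compl_iff,
      Set.not_nonempty_iff_eq_empty]
    constructor
    · intro h
      constructor
      · rw [Set.eq_empty_iff_forall_notMem] at h ⊢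
        exact fun x hx => h x ⟨hx.1, Or.inl hx.2⟩
      · rw [Set.eq_empty_iff_forall_notMem] at h ⊢
        exact fun x hx => h x ⟨hx.1, Or.inr hx.2⟩
    · rintro ⟨hA, hB⟩
      rw [Set.eq_empty_iff_forall_notMem] at hA hB ⊢
      rintro x ⟨hx, hxW | hxv⟩
      · exact hA x ⟨hx, hxW⟩
      · exact hB x ⟨hx, hxv⟩
  have t4 : G.Q K S Set.univ = G.Q S K Set.univ := G.Q_symm_univ K S
  rw [t1, t2, t3, t4]
  exact G.cpa_down cpa (upFam_nonempty_inter W) (upFam_nonempty_inter {v})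

end Derived

/-! ### Reduction lemmas on pinned graphs -/

section Reduction

variable (G : PercGraph V E)

lemma Q_seed_extend {e : E} (hpe : G.p e = 1) {x v : V}
    (hor : G.ends e = (x, v) ∨ G.ends e = (v, x)) {K : Set V} (hx : x ∈ K)
    (S : Set V) (F : Set (Set V)) : G.Q K S F = G.Q (K ∪ {v}) S F := by
  apply G.prob_congr_support
  intro ω hw
  have he : ω e = true := G.omega_true_of_pone hpe hw
  have hcl : G.cluster ω (K ∪ {v}) = G.cluster ω K := G.cluster_extend_open he hor hx
  simp only [Set.mem_setOf_eq, hcl]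

lemma Q_avoid_extend {e : E} (hpe : G.p e = 1) {z w : V}
    (hor : G.ends e = (z, w) ∨ G.ends e = (w, z)) {S : Set V} (hz : z ∈ S)
    (K : Set V) (F : Set (Set V)) : G.Q K S F = G.Q K (S ∪ {w}) F := by
  apply G.prob_congr_support
  intro ω hw'
  have he : ω e = true := G.omega_true_of_pone hpe hw'
  simp only [Set.mem_setOf_eq]
  constructor
  · rintro ⟨hF, hS⟩
    refine ⟨hF, ?_⟩
    rw [Set.eq_empty_iff_forall_notMem] at hS ⊢
    rintro u ⟨hu, huS | huw⟩
    · exact hS u ⟨hu, huS⟩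
    · rcases huw with rfl
      have hzC : z ∈ G.cluster ω K :=
        G.cluster_conn_closed hu (Relation.ReflTransGen.single ⟨e, he, hor.symm⟩)
      exact hS z ⟨hzC, hz⟩
  · rintro ⟨hF, hS⟩
    refine ⟨hF, ?_⟩
    rw [Set.eq_empty_iff_forall_notMem] at hS ⊢
    exact fun u hu => hS u ⟨hu.1, Or.inl hu.2⟩

lemma NQ_seed1_extend {e : E} (hpe : G.p e = 1) {x v : V}
    (hor : G.ends e = (x, v) ∨ G.ends e = (v, x)) {K₁ : Set V} (hx : x ∈ K₁)
    (K₂ : Set V) (F₁ F₂ : Set (Set V)) :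
    G.NQ K₁ K₂ F₁ F₂ = G.NQ (K₁ ∪ {v}) K₂ F₁ F₂ := by
  apply G.prob_congr_support
  intro ω hw
  have he : ω e = true := G.omega_true_of_pone hpe hw
  have hcl : G.cluster ω (K₁ ∪ {v}) = G.cluster ω K₁ := G.cluster_extend_open he hor hx
  simp only [Set.mem_setOf_eq, hcl]

lemma NQ_seed2_extend {e : E} (hpe : G.p e = 1) {x v : V}
    (hor : G.ends e = (x, v) ∨ G.ends e = (v, x)) {K₂ : Set V} (hx : x ∈ K₂)
    (K₁ : Set V) (F₁ F₂ : Set (Set V)) :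
    G.NQ K₁ K₂ F₁ F₂ = G.NQ K₁ (K₂ ∪ {v}) F₁ F₂ := by
  apply G.prob_congr_support
  intro ω hw
  have he : ω e = true := G.omega_true_of_pone hpe hw
  have hcl : G.cluster ω (K₂ ∪ {v}) = G.cluster ω K₂ := G.cluster_extend_open he hor hx
  simp only [Set.mem_setOf_eq, hcl]
  constructor
  · rintro ⟨h1, h2, h3⟩
    refine ⟨h1, h2, ?_⟩
    rw [Set.eq_empty_iff_forall_notMem] at h3 ⊢
    rintro u ⟨hu, huK | huv⟩
    · exact h3 u ⟨hu, huK⟩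
    · rcases huv with rfl
      have hxC : x ∈ G.cluster ω K₁ :=
        G.cluster_conn_closed hu (Relation.ReflTransGen.single ⟨e, he, hor.symm⟩)
      exact h3 x ⟨hxC, hx⟩
  · rintro ⟨h1, h2, h3⟩
    refine ⟨h1, h2, ?_⟩
    rw [Set.eq_empty_iff_forall_notMem] at h3 ⊢
    exact fun u hu => h3 u ⟨hu.1, Or.inl hu.2⟩

/-- Flip independence when both endpoints lie in the avoided set. -/
lemma Q_flip_avoid {e : E} {S : Set V} (h1 : (G.ends e).1 ∈ S) (h2 : (G.ends e).2 ∈ S)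
    (K : Set V) (F : Set (Set V)) :
    (G.withEdgeProb e 1).Q K S F = (G.withEdgeProb e 0).Q K S F := by
  unfold Q
  simp only [withEdgeProb_cluster]
  apply G.prob_flip
  intro ω b
  have key : ∀ σ : E → Bool,
      (G.cluster σ K ∈ F ∧ G.cluster σ K ∩ S = ∅) ↔
      (G.cluster (Function.update σ e false) K ∈ F ∧
        G.cluster (Function.update σ e false) K ∩ S = ∅) := by
    intro σ
    set σf := Function.update σ e false with hσf
    have hsub : G.cluster σf K ⊆ G.cluster σ K := by
      apply G.cluster_mono_config
      intro f hf
      by_cases hfe : f = e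
      · subst hfe; rw [hσf] at hf; simp at hf
      · rw [hσf] at hf; rwa [Function.update_of_ne hfe] at hf
    have heq : ∀ (hS : G.cluster σf K ∩ S = ∅), G.cluster σ K = G.cluster σf K := by
      intro hS
      rw [Set.eq_empty_iff_forall_notMem] at hS
      have hn1 : (G.ends e).1 ∉ G.cluster σf K := fun h => hS _ ⟨h, h1⟩
      have hn2 : (G.ends e).2 ∉ G.cluster σf K := fun h => hS _ ⟨h, h2⟩
      have := G.cluster_update_true_of_not_mem (ω := σf) (e := e) hn1 hn2
      by_cases hσe : σ e = true
      · have hσ : Function.update σf e true = σ := by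
          funext f
          by_cases hfe : f = e
          · subst hfe; simp [hσf, hσe]
          · simp [hσf, Function.update_of_ne hfe]
        rw [← hσ]; exact this
      · have hσ : σf = σ := by
          funext f
          by_cases hfe : f = e
          · subst hfe; simp at hσe; simp [hσf, hσe]
          · simp [hσf, Function.update_of_ne hfe]
        rw [hσ]
    constructor
    · rintro ⟨hF, hS⟩
      have hSf : G.cluster σf K ∩ S = ∅ := by
        rw [Set.eq_empty_iff_forall_notMem] at hS ⊢
        exact fun u hu => hS u ⟨hsub hu.1, hu.2⟩
      rw [heq hSf] at hF hS
      exact ⟨hF, hSf⟩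
    · rintro ⟨hF, hS⟩
      rw [← heq hS] at hF
      refine ⟨hF, ?_⟩
      rw [heq hS]
      exact hS
  have hupd : Function.update (Function.update ω e b) e false = Function.update ω e false := by
    simp [Function.update_idem]
  constructor
  · intro h
    rw [Set.mem_setOf_eq] at h ⊢
    rw [key (Function.update ω e b), hupd, ← key ω]
    exact h
  · intro h
    rw [Set.mem_setOf_eq] at h ⊢
    rw [key ω, ← hupd, ← key (Function.update ω e b)]
    exact h

/-- Flip independence when both endpoints lie in the seed. -/
lemma Q_flip_seed {e : E} {K : Set V} (h1 : (G.ends e).1 ∈ K) (h2 : (G.ends e).2 ∈ K)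
    (S : Set V) (F : Set (Set V)) :
    (G.withEdgeProb e 1).Q K S F = (G.withEdgeProb e 0).Q K S F := by
  unfold Q
  simp only [withEdgeProb_cluster]
  apply G.prob_flip
  intro ω b
  have := G.cluster_update_of_endpoints_seed (ω := ω) (e := e) h1 h2 b
  simp only [Set.mem_setOf_eq, this]

/-- Pin decomposition for Q. -/
lemma Q_pin (e : E) (K S : Set V) (F : Set (Set V)) :
    G.Q K S F = G.p e * (G.withEdgeProb e 1).Q K S F
      + (1 - G.p e) * (G.withEdgeProb e 0).Q K S F := by
  unfold Q
  simp only [withEdgeProb_cluster]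
  exact G.prob_pin e _

lemma NQ_pin (e : E) (K₁ K₂ : Set V) (F₁ F₂ : Set (Set V)) :
    G.NQ K₁ K₂ F₁ F₂ = G.p e * (G.withEdgeProb e 1).NQ K₁ K₂ F₁ F₂
      + (1 - G.p e) * (G.withEdgeProb e 0).NQ K₁ K₂ F₁ F₂ := by
  unfold NQ
  simp only [withEdgeProb_cluster]
  exact G.prob_pin e _

end Reduction

/-! ### Deterministic-seed lemmas -/

section Det

variable (G : PercGraph V E)

/-- If every possibly-open edge does not cross the boundary of `K`, then the cluster
of `K` is a.s. equal to `K`. -/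
def Quiet (G : PercGraph V E) (K : Set V) : Prop :=
  ∀ e, G.p e ≠ 0 → (((G.ends e).1 ∈ K) ↔ ((G.ends e).2 ∈ K))

lemma cluster_eq_of_quiet {K : Set V} (hq : G.Quiet K) {ω : E → Bool}
    (hw : G.weight ω ≠ 0) : G.cluster ω K = K := by
  apply G.cluster_no_escape
  intro e he
  apply hq e
  intro hp0
  have := G.omega_false_of_pzero hp0 hw
  rw [this] at he
  exact Bool.noConfusion he

lemma Q_det_one (hG : G.ProbValid) {K S : Set V} (hq : G.Quiet K) {F : Set (Set V)}
    (hKF : K ∈ F) (hKS : K ∩ S = ∅) : G.Q K S F = 1 := by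
  have : G.Q K S F = G.prob Set.univ := by
    apply G.prob_congr_support
    intro ω hw
    simp only [Set.mem_setOf_eq, Set.mem_univ, iff_true]
    rw [G.cluster_eq_of_quiet hq hw]
    exact ⟨hKF, hKS⟩
  rw [this, G.prob_univ_eq_one hG]

lemma Q_det_zero {K S : Set V} (hq : G.Quiet K) {F : Set (Set V)}
    (h : K ∉ F) : G.Q K S F = 0 := by
  apply G.prob_zero_of_support
  intro ω hw
  rw [Set.mem_setOf_eq, G.cluster_eq_of_quiet hq hw]
  exact fun hc => h hc.1

lemma Q_eq_B_of_seed_mem {K K' S : Set V} (hKK' : K ⊆ K') {F : Set (Set V)}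
    (hF : UpFam F) (hKF : K ∈ F) : G.Q K' S F = G.Q K' S Set.univ := by
  unfold Q
  apply congrArg
  ext ω
  simp only [Set.mem_setOf_eq, Set.mem_univ, true_and]
  constructor
  · exact fun h => h.2
  · intro h
    exact ⟨hF (hKK'.trans (G.subset_cluster ω K')) hKF, h⟩

lemma NQ_zero_of_inter {K₁ K₂ : Set V} (h : (K₁ ∩ K₂).Nonempty) (F₁ F₂ : Set (Set V)) :
    G.NQ K₁ K₂ F₁ F₂ = 0 := by
  apply G.prob_zero_of_support
  intro ω _
  rw [Set.mem_setOf_eq]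
  rintro ⟨-, -, hd⟩
  obtain ⟨v, hv1, hv2⟩ := h
  rw [Set.eq_empty_iff_forall_notMem] at hd
  exact hd v ⟨G.subset_cluster ω K₁ hv1, hv2⟩

lemma NQ_det1_mem (hG : G.ProbValid) {K₁ K₂ : Set V} (hq : G.Quiet K₁)
    (hdisj : K₁ ∩ K₂ = ∅) {F₁ : Set (Set V)} (hF : K₁ ∈ F₁) (F₂ : Set (Set V)) :
    G.NQ K₁ K₂ F₁ F₂ = G.NQ K₁ K₂ Set.univ F₂ := by
  apply G.prob_congr_support
  intro ω hw
  rw [Set.mem_setOf_eq, Set.mem_setOf_eq, G.cluster_eq_of_quiet hq hw]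
  simp [hF, hdisj]

lemma NQ_det1_not_mem {K₁ K₂ : Set V} (hq : G.Quiet K₁)
    {F₁ : Set (Set V)} (hF : K₁ ∉ F₁) (F₂ : Set (Set V)) :
    G.NQ K₁ K₂ F₁ F₂ = 0 := by
  apply G.prob_zero_of_support
  intro ω hw
  rw [Set.mem_setOf_eq, G.cluster_eq_of_quiet hq hw]
  exact fun hc => hF hc.1

/-- Positivity of the avoidance probability is witnessed by the minimal configuration. -/
lemma B_pos_iff (hG : G.ProbValid) (K S : Set V) :
    0 < G.Q K S Set.univ ↔ G.cluster G.omegaStar K ∩ S = ∅ := by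
  constructor
  · intro hpos
    by_contra hne
    have : G.Q K S Set.univ = 0 := by
      apply G.prob_zero_of_support
      intro ω hw
      rw [Set.mem_setOf_eq]
      rintro ⟨-, hd⟩
      apply hne
      rw [Set.eq_empty_iff_forall_notMem] at hd ⊢
      intro v hv
      exact hd v ⟨G.cluster_mono_config (G.omegaStar_le_support hw) K hv.1, hv.2⟩
    rw [this] at hpos
    exact lt_irrefl 0 hpos
  · intro hdisj
    have hws : 0 < G.weight G.omegaStar := by
      apply Finset.prod_pos
      intro e _
      by_cases h1 : G.p e = 1
      · simp [omegaStar, h1]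
      · have := (hG e).2
        have hlt : G.p e < 1 := lt_of_le_of_ne this h1
        simp [omegaStar, h1]
        linarith
    calc (0:ℝ) < G.weight G.omegaStar := hws
      _ ≤ G.Q K S Set.univ := G.single_le_prob hG ⟨Set.mem_univ _, hdisj⟩

lemma B_zero_dichotomy (hG : G.ProbValid) {K' S : Set V} (v : V) (K : Set V)
    (h : G.Q (K' ∪ {v}) S Set.univ = 0) :
    G.Q K' S Set.univ = 0 ∨ G.Q (K ∪ {v}) S Set.univ = 0 := by
  have hnot : ¬ (G.cluster G.omegaStar (K' ∪ {v}) ∩ S = ∅) := by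
    intro hdisj
    have := (G.B_pos_iff hG (K' ∪ {v}) S).mpr hdisj
    rw [h] at this
    exact lt_irrefl 0 this
  rw [G.cluster_union] at hnot
  have : ¬ (G.cluster G.omegaStar K' ∩ S = ∅) ∨
      ¬ (G.cluster G.omegaStar {v} ∩ S = ∅) := by
    by_contra hc
    push_neg at hc
    apply hnot
    rw [Set.union_inter_distrib_right, hc.1, hc.2, Set.union_empty]
  rcases this with hK' | hv
  · left
    by_contra hne
    have hpos : 0 < G.Q K' S Set.univ := by
      rcases lt_or_eq_of_le (G.Q_nonneg hG K' S Set.univ) with h | h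
      · exact h
      · exact absurd h.symm hne
    exact hK' ((G.B_pos_iff hG K' S).mp hpos)
  · right
    apply G.prob_zero_of_support
    intro ω hw
    rw [Set.mem_setOf_eq]
    rintro ⟨-, hd⟩
    apply hv
    rw [Set.eq_empty_iff_forall_notMem] at hd ⊢
    intro u hu
    have h1 : u ∈ G.cluster ω (K ∪ {v}) :=
      G.cluster_mono_config (G.omegaStar_le_support hw) _
        (G.cluster_mono_seed (Set.subset_union_right) _ hu.1)
    exact hd u ⟨h1, hu.2⟩

end Det

/-! ### Arithmetic cross-term lemmas -/

section Arith

lemma pin_combine {p q A₁ A₀ B₁ B₀ C₁ C₀ D₁ D₀ : ℝ} (hp : 0 ≤ p) (hq : 0 ≤ q)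
    (h1 : C₁ * D₁ ≤ A₁ * B₁) (h0 : C₀ * D₀ ≤ A₀ * B₀)
    (hcross : C₁ * D₀ + C₀ * D₁ ≤ A₁ * B₀ + A₀ * B₁) :
    (p * C₁ + q * C₀) * (p * D₁ + q * D₀) ≤ (p * A₁ + q * A₀) * (p * B₁ + q * B₀) := by
  nlinarith [mul_le_mul_of_nonneg_left h1 (mul_nonneg hp hp),
    mul_le_mul_of_nonneg_left h0 (mul_nonneg hq hq),
    mul_le_mul_of_nonneg_left hcross (mul_nonneg hp hq)]

lemma cross_aligned {A₁ A₀ B₁ B₀ C₁ C₀ D₁ D₀ : ℝ}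
    (hB₁ : 0 ≤ B₁) (hB₀ : 0 ≤ B₀)
    (hA₁ : 0 ≤ A₁) (hA₀ : 0 ≤ A₀) (hC₁ : 0 ≤ C₁) (hC₀ : 0 ≤ C₀)
    (hD₁ : 0 ≤ D₁) (hD₀ : 0 ≤ D₀)
    (hAB₁ : A₁ ≤ B₁) (hCB₁ : C₁ ≤ B₁) (hDB₁ : D₁ ≤ B₁)
    (hAB₀ : A₀ ≤ B₀) (hCB₀ : C₀ ≤ B₀) (hDB₀ : D₀ ≤ B₀)
    (h1 : C₁ * D₁ ≤ A₁ * B₁) (h0 : C₀ * D₀ ≤ A₀ * B₀)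
    (hsign : 0 ≤ (C₁ * B₀ - C₀ * B₁) * (D₁ * B₀ - D₀ * B₁)) :
    C₁ * D₀ + C₀ * D₁ ≤ A₁ * B₀ + A₀ * B₁ := by
  rcases eq_or_lt_of_le hB₁ with hB₁0 | hB₁pos
  · replace hB₁0 : B₁ = 0 := hB₁0.symm
    have hA : A₁ = 0 := le_antisymm (hAB₁.trans hB₁0.le) hA₁
    have hC : C₁ = 0 := le_antisymm (hCB₁.trans hB₁0.le) hC₁
    have hD : D₁ = 0 := le_antisymm (hDB₁.trans hB₁0.le) hD₁
    rw [hA, hC, hD, hB₁0]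
    ring_nf
    simp
  rcases eq_or_lt_of_le hB₀ with hB₀0 | hB₀pos
  · replace hB₀0 : B₀ = 0 := hB₀0.symm
    have hA : A₀ = 0 := le_antisymm (hAB₀.trans hB₀0.le) hA₀
    have hC : C₀ = 0 := le_antisymm (hCB₀.trans hB₀0.le) hC₀
    have hD : D₀ = 0 := le_antisymm (hDB₀.trans hB₀0.le) hD₀
    rw [hA, hC, hD, hB₀0]
    ring_nf
    simp
  have key : (C₁ * D₀ + C₀ * D₁) * (B₀ * B₁) ≤ (A₁ * B₀ + A₀ * B₁) * (B₀ * B₁) := by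
    nlinarith [mul_le_mul_of_nonneg_left h1 (mul_nonneg hB₀ hB₀),
      mul_le_mul_of_nonneg_left h0 (mul_nonneg hB₁ hB₁), hsign]
  exact le_of_mul_le_mul_right key (mul_pos hB₀pos hB₁pos)

lemma cross_aligned_le {A₁ A₀ B₁ B₀ C₁ C₀ D₁ D₀ : ℝ}
    (hB₁ : 0 ≤ B₁) (hB₀ : 0 ≤ B₀)
    (hA₁ : 0 ≤ A₁) (hA₀ : 0 ≤ A₀) (hC₁ : 0 ≤ C₁) (hC₀ : 0 ≤ C₀)
    (hD₁ : 0 ≤ D₁) (hD₀ : 0 ≤ D₀)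
    (hAB₁ : A₁ ≤ B₁) (hCB₁ : C₁ ≤ B₁) (hDB₁ : D₁ ≤ B₁)
    (hAB₀ : A₀ ≤ B₀) (hCB₀ : C₀ ≤ B₀) (hDB₀ : D₀ ≤ B₀)
    (h1 : A₁ * B₁ ≤ C₁ * D₁) (h0 : A₀ * B₀ ≤ C₀ * D₀)
    (hsign : (C₁ * B₀ - C₀ * B₁) * (D₁ * B₀ - D₀ * B₁) ≤ 0) :
    A₁ * B₀ + A₀ * B₁ ≤ C₁ * D₀ + C₀ * D₁ := by
  rcases eq_or_lt_of_le hB₁ with hB₁0 | hB₁pos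
  · replace hB₁0 : B₁ = 0 := hB₁0.symm
    have hA : A₁ = 0 := le_antisymm (hAB₁.trans hB₁0.le) hA₁
    have hC : C₁ = 0 := le_antisymm (hCB₁.trans hB₁0.le) hC₁
    have hD : D₁ = 0 := le_antisymm (hDB₁.trans hB₁0.le) hD₁
    rw [hA, hC, hD, hB₁0]
    ring_nf
    simp
  rcases eq_or_lt_of_le hB₀ with hB₀0 | hB₀pos
  · replace hB₀0 : B₀ = 0 := hB₀0.symm
    have hA : A₀ = 0 := le_antisymm (hAB₀.trans hB₀0.le) hA₀
    have hC : C₀ = 0 := le_antisymm (hCB₀.trans hB₀0.le) hC₀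
    have hD : D₀ = 0 := le_antisymm (hDB₀.trans hB₀0.le) hD₀
    rw [hA, hC, hD, hB₀0]
    ring_nf
    simp
  have key : (A₁ * B₀ + A₀ * B₁) * (B₀ * B₁) ≤ (C₁ * D₀ + C₀ * D₁) * (B₀ * B₁) := by
    nlinarith [mul_le_mul_of_nonneg_left h1 (mul_nonneg hB₀ hB₀),
      mul_le_mul_of_nonneg_left h0 (mul_nonneg hB₁ hB₁), hsign]
  exact le_of_mul_le_mul_right key (mul_pos hB₀pos hB₁pos)

lemma ratio_chain {b c d β γ δ : ℝ} (hb : 0 ≤ b) (hc : 0 ≤ c) (hd : 0 ≤ d)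
    (hβ : 0 ≤ β) (hγ : 0 ≤ γ) (hδpos : 0 < δ)
    (h2 : d * β ≤ b * δ) (h3 : c * δ ≤ d * γ) : c * β ≤ b * γ := by
  rcases eq_or_lt_of_le hd with hd0 | hdpos
  · have hc0 : c = 0 := by nlinarith
    rw [hc0]
    simp
    exact mul_nonneg hb hγ
  · have hmul : (c * δ) * (d * β) ≤ (d * γ) * (b * δ) :=
      mul_le_mul h3 h2 (mul_nonneg hd hβ) (mul_nonneg hd hγ)
    have h' : (c * β) * (d * δ) ≤ (b * γ) * (d * δ) := by nlinarith [hmul]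
    exact le_of_mul_le_mul_right h' (mul_pos hdpos hδpos)

lemma crossMa {a b c d α β γ δ : ℝ}
    (ha : 0 ≤ a) (hb : 0 ≤ b) (hc : 0 ≤ c) (hd : 0 ≤ d)
    (hα : 0 ≤ α) (hβ : 0 ≤ β) (hγ : 0 ≤ γ) (hδ : 0 ≤ δ)
    (haα : a ≤ α) (hbβ : b ≤ β) (hcγ : c ≤ γ) (hdδ : d ≤ δ)
    (hαβ : α ≤ β) (hαγ : α ≤ γ) (hγδ : γ ≤ δ) (hβδ : β ≤ δ)
    (h1 : c * α ≤ a * γ) (h2 : d * β ≤ b * δ) (h3 : c * δ ≤ d * γ)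
    (h5 : α * δ ≤ β * γ) :
    c * β + d * α ≤ a * δ + b * γ := by
  rcases eq_or_lt_of_le hδ with hδ0 | hδpos
  · replace hδ0 : δ = 0 := hδ0.symm
    have hγ0 : γ = 0 := le_antisymm (hγδ.trans hδ0.le) hγ
    have hβ0 : β = 0 := le_antisymm (hβδ.trans hδ0.le) hβ
    have hα0 : α = 0 := le_antisymm (hαγ.trans hγ0.le) hα
    rw [hγ0, hβ0, hα0, hδ0]
    simp
  rcases eq_or_lt_of_le hγ with hγ0 | hγpos
  · replace hγ0 : γ = 0 := hγ0.symm
    have hα0 : α = 0 := le_antisymm (hαγ.trans hγ0.le) hα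
    have hc0 : c = 0 := le_antisymm (hcγ.trans hγ0.le) hc
    have ha0 : a = 0 := le_antisymm (haα.trans hα0.le) ha
    rw [hα0, hc0, ha0, hγ0]
    simp
  rcases eq_or_lt_of_le hβ with hβ0 | hβpos
  · replace hβ0 : β = 0 := hβ0.symm
    have hα0 : α = 0 := le_antisymm (hαβ.trans hβ0.le) hα
    have hb0 : b = 0 := le_antisymm (hbβ.trans hβ0.le) hb
    have ha0 : a = 0 := le_antisymm (haα.trans hα0.le) ha
    rw [hα0, hb0, ha0, hβ0]
    simp
  have hcb : c * β ≤ b * γ := ratio_chain hb hc hd hβ hγ hδpos h2 h3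
  rcases eq_or_lt_of_le hα with hα0 | hαpos
  · replace hα0 : α = 0 := hα0.symm
    have ha0 : a = 0 := le_antisymm (haα.trans hα0.le) ha
    rw [ha0, hα0]
    simp only [mul_zero, zero_mul, add_zero, zero_add]
    exact hcb
  by_cases hda : d * α ≤ a * δ
  · nlinarith [hcb, hda]
  · push_neg at hda
    have hid : (b * γ - c * β) * (α * δ) - (d * α - a * δ) * (β * γ)
        = α * γ * (b * δ - d * β) + β * δ * (a * γ - c * α) := by ring
    have hpos1 : 0 ≤ α * γ * (b * δ - d * β) :=
      mul_nonneg (mul_nonneg hα hγ) (by linarith)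
    have hpos2 : 0 ≤ β * δ * (a * γ - c * α) :=
      mul_nonneg (mul_nonneg hβ hδ) (by linarith)
    have hge : (d * α - a * δ) * (β * γ) ≤ (b * γ - c * β) * (α * δ) := by linarith
    have h6 : (d * α - a * δ) * (α * δ) ≤ (d * α - a * δ) * (β * γ) :=
      mul_le_mul_of_nonneg_left h5 (by linarith)
    have h8 : d * α - a * δ ≤ b * γ - c * β :=
      le_of_mul_le_mul_right (h6.trans hge) (mul_pos hαpos hδpos)
    linarith

lemma crossMb {a b c d α β γ δ : ℝ}
    (ha : 0 ≤ a) (hb : 0 ≤ b) (hc : 0 ≤ c) (hd : 0 ≤ d)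
    (hα : 0 ≤ α) (hβ : 0 ≤ β) (hγ : 0 ≤ γ) (hδ : 0 ≤ δ)
    (haα : a ≤ α) (hbβ : b ≤ β) (hcγ : c ≤ γ) (hdδ : d ≤ δ)
    (hαβ : α ≤ β) (hαγ : α ≤ γ) (hγδ : γ ≤ δ) (hβδ : β ≤ δ)
    (h1 : c * α ≤ a * γ) (h2 : d * β ≤ b * δ) (h3b : d * γ ≤ c * δ)
    (h5b : β * γ ≤ α * δ) (hα0d : α = 0 → β = 0 ∨ γ = 0) :
    c * β + d * α ≤ a * δ + b * γ := by
  rcases eq_or_lt_of_le hδ with hδ0 | hδpos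
  · replace hδ0 : δ = 0 := hδ0.symm
    have hγ0 : γ = 0 := le_antisymm (hγδ.trans hδ0.le) hγ
    have hβ0 : β = 0 := le_antisymm (hβδ.trans hδ0.le) hβ
    have hα0 : α = 0 := le_antisymm (hαγ.trans hγ0.le) hα
    rw [hγ0, hβ0, hα0, hδ0]
    simp
  rcases eq_or_lt_of_le hγ with hγ0 | hγpos
  · replace hγ0 : γ = 0 := hγ0.symm
    have hα0 : α = 0 := le_antisymm (hαγ.trans hγ0.le) hα
    have hc0 : c = 0 := le_antisymm (hcγ.trans hγ0.le) hc
    have ha0 : a = 0 := le_antisymm (haα.trans hα0.le) ha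
    rw [hα0, hc0, ha0, hγ0]
    simp
  rcases eq_or_lt_of_le hβ with hβ0 | hβpos
  · replace hβ0 : β = 0 := hβ0.symm
    have hα0 : α = 0 := le_antisymm (hαβ.trans hβ0.le) hα
    have hb0 : b = 0 := le_antisymm (hbβ.trans hβ0.le) hb
    have ha0 : a = 0 := le_antisymm (haα.trans hα0.le) ha
    rw [hα0, hb0, ha0, hβ0]
    simp
  rcases eq_or_lt_of_le hα with hα0 | hαpos
  · rcases hα0d hα0.symm with h | h
    · exact absurd h (ne_of_gt hβpos)
    · exact absurd h (ne_of_gt hγpos)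
  by_cases hcb : c * β ≤ b * γ
  · have hda : d * α ≤ a * δ := by
      rcases eq_or_lt_of_le hc with hc0 | hcpos
      · have hd0 : d = 0 := by nlinarith
        rw [hd0]
        simp
        positivity
      · have hmul : (d * γ) * (c * α) ≤ (c * δ) * (a * γ) :=
          mul_le_mul h3b h1 (mul_nonneg hc hα) (mul_nonneg hc hδ)
        have h' : (d * α) * (c * γ) ≤ (a * δ) * (c * γ) := by nlinarith [hmul]
        exact le_of_mul_le_mul_right h' (mul_pos hcpos hγpos)
    linarith
  · push_neg at hcb
    have hid : (a * δ - d * α) * (β * γ) - (c * β - b * γ) * (α * δ)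
        = β * δ * (a * γ - c * α) + α * γ * (b * δ - d * β) := by ring
    have hpos1 : 0 ≤ β * δ * (a * γ - c * α) :=
      mul_nonneg (mul_nonneg hβ hδ) (by linarith)
    have hpos2 : 0 ≤ α * γ * (b * δ - d * β) :=
      mul_nonneg (mul_nonneg hα hγ) (by linarith)
    have hge : (c * β - b * γ) * (α * δ) ≤ (a * δ - d * α) * (β * γ) := by linarith
    have h6 : (c * β - b * γ) * (β * γ) ≤ (c * β - b * γ) * (α * δ) :=
      mul_le_mul_of_nonneg_left h5b (by linarith)
    have h8 : c * β - b * γ ≤ a * δ - d * α :=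
      le_of_mul_le_mul_right (h6.trans hge) (mul_pos hβpos hγpos)
    linarith

end Arith

/-! ### Measures for the induction -/

/-- Number of edges not internal to `K`. -/
noncomputable def measK (G : PercGraph V E) (K : Set V) : ℕ :=
  (Finset.univ.filter (fun e => ¬((G.ends e).1 ∈ K ∧ (G.ends e).2 ∈ K))).card

lemma measK_withEdgeProb (G : PercGraph V E) (e : E) (q : ℝ) (K : Set V) :
    measK (G.withEdgeProb e q) K = measK G K := rfl

lemma measK_mono (G : PercGraph V E) {K K' : Set V} (h : K ⊆ K') :
    measK G K' ≤ measK G K := by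
  apply Finset.card_le_card
  intro f hf
  simp only [Finset.mem_filter, Finset.mem_univ, true_and] at hf ⊢
  exact fun hc => hf ⟨h hc.1, h hc.2⟩

lemma measK_lt (G : PercGraph V E) {K : Set V} {e : E} {x v : V}
    (hor : G.ends e = (x, v) ∨ G.ends e = (v, x)) (hx : x ∈ K) (hv : v ∉ K) :
    measK G (K ∪ {v}) < measK G K := by
  apply Finset.card_lt_card
  constructor
  · intro f hf
    simp only [Finset.mem_filter, Finset.mem_univ, true_and] at hf ⊢
    exact fun hc => hf ⟨Or.inl hc.1, Or.inl hc.2⟩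
  · intro hsub
    have he1 : e ∈ Finset.univ.filter
        (fun f => ¬((G.ends f).1 ∈ K ∧ (G.ends f).2 ∈ K)) := by
      simp only [Finset.mem_filter, Finset.mem_univ, true_and]
      intro hboth
      rcases hor with hor | hor <;> rw [hor] at hboth
      · exact hv hboth.2
      · exact hv hboth.1
    have h2 := hsub he1
    simp only [Finset.mem_filter, Finset.mem_univ, true_and] at h2
    apply h2
    rcases hor with hor | hor <;> rw [hor]
    · exact ⟨Or.inl hx, Or.inr rfl⟩
    · exact ⟨Or.inr rfl, Or.inl hx⟩

/-! ### The master induction -/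

lemma NQ_mono_fam (G : PercGraph V E) (hG : G.ProbValid) {K₁ K₂ : Set V}
    {F₁ F₁' F₂ F₂' : Set (Set V)} (h1 : F₁ ⊆ F₁') (h2 : F₂ ⊆ F₂') :
    G.NQ K₁ K₂ F₁ F₂ ≤ G.NQ K₁ K₂ F₁' F₂' :=
  G.prob_mono hG (fun ω hω => ⟨h1 hω.1, h2 hω.2.1, hω.2.2⟩)

lemma touch_orient (G : PercGraph V E) {A : Set V} {e : E}
    (h : (G.ends e).1 ∈ A ∨ (G.ends e).2 ∈ A) :
    ∃ z w, (G.ends e = (z, w) ∨ G.ends e = (w, z)) ∧ z ∈ A := by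
  rcases h with h | h
  · exact ⟨(G.ends e).1, (G.ends e).2, Or.inl Prod.mk.eta.symm, h⟩
  · exact ⟨(G.ends e).2, (G.ends e).1, Or.inr Prod.mk.eta.symm, h⟩

lemma ends_mem_of_orient (G : PercGraph V E) {e : E} {z w : V} {T : Set V}
    (hor : G.ends e = (z, w) ∨ G.ends e = (w, z)) (hz : z ∈ T) (hw : w ∈ T) :
    (G.ends e).1 ∈ T ∧ (G.ends e).2 ∈ T := by
  rcases hor with hor | hor <;> rw [hor] <;> exact ⟨by assumption, by assumption⟩

theorem master : ∀ n m : ℕ, ∀ G : PercGraph V E, G.ProbValid → G.freeC ≤ n →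
    (∀ K S : Set V, measK G K + measK G S ≤ m → G.CPAat K S) ∧
    (∀ K K' S : Set V, K ⊆ K' → measK G K + measK G S ≤ m → G.MonAat K K' S) ∧
    (∀ K₁ K₂ : Set V, measK G K₁ + measK G K₂ ≤ m → G.NAat K₁ K₂) := by
  intro n
  induction n using Nat.strong_induction_on with
  | _ n ihn =>
  intro m
  induction m using Nat.strong_induction_on with
  | _ m ihm =>
  intro G hG hfree
  refine ⟨?_, ?_, ?_⟩
  · -- CPA part
    intro K S hm F₁ F₂ hF₁ hF₂
    by_cases hdeg : (K ∩ S).Nonempty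
    · simp [G.Q_zero_of_inter hdeg]
    by_cases hfS : ∃ e, (G.p e ≠ 0 ∧ G.p e ≠ 1) ∧ ((G.ends e).1 ∈ S ∨ (G.ends e).2 ∈ S)
    · -- pin a free edge touching S
      obtain ⟨e, hefree, hetouch⟩ := hfS
      obtain ⟨z, w, hor, hz⟩ := G.touch_orient hetouch
      set G₁ := G.withEdgeProb e 1 with hG₁def
      set G₀ := G.withEdgeProb e 0 with hG₀def
      have hG₁ : G₁.ProbValid := G.valid_withEdgeProb hG e zero_le_one le_rfl
      have hG₀ : G₀.ProbValid := G.valid_withEdgeProb hG e le_rfl zero_le_one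
      have hlt₀ : G₀.freeC < n :=
        lt_of_lt_of_le (G.freeC_pin_lt hefree (Or.inl rfl)) hfree
      have hends : (G.ends e).1 ∈ S ∪ {w} ∧ (G.ends e).2 ∈ S ∪ {w} :=
        G.ends_mem_of_orient hor (Or.inl hz) (Or.inr rfl)
      -- package at G₀
      obtain ⟨cpa₀, monA₀, -⟩ :=
        ihn G₀.freeC hlt₀ (measK G K + measK G S) G₀ hG₀ le_rfl
      have hmono : measK G₀ K + measK G₀ (S ∪ {w}) ≤ measK G K + measK G S := by
        rw [measK_withEdgeProb, measK_withEdgeProb]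
        exact add_le_add le_rfl (G.measK_mono Set.subset_union_left)
      have hsame : measK G₀ K + measK G₀ S ≤ measK G K + measK G S := by
        rw [measK_withEdgeProb, measK_withEdgeProb]
      have cpaW : G₀.CPAat K (S ∪ {w}) := cpa₀ K (S ∪ {w}) hmono
      have cpaS : G₀.CPAat K S := cpa₀ K S hsame
      -- reduction of quantities
      have hred : ∀ X : Set (Set V),
          G.Q K S X = G.p e * G₀.Q K (S ∪ {w}) X + (1 - G.p e) * G₀.Q K S X := by
        intro X
        rw [G.Q_pin e K S X]
        congr 2
        have hor₁ : G₁.ends e = (z, w) ∨ G₁.ends e = (w, z) := by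
          exact hor
        rw [G₁.Q_avoid_extend (by simp [hG₁def]) hor₁ hz K X]
        exact G.Q_flip_avoid hends.1 hends.2 K X
      have hq : 0 ≤ 1 - G.p e := by linarith [(hG e).2]
      have hp : 0 ≤ G.p e := (hG e).1
      rw [hred F₁, hred F₂, hred (F₁ ∩ F₂), hred Set.univ]
      apply pin_combine hp hq
      · exact cpaW F₁ F₂ hF₁ hF₂
      · exact cpaS F₁ F₂ hF₁ hF₂
      · -- cross term
        have hbr₁ : G₀.Q K (S ∪ {w}) F₁ * G₀.Q K S Set.univ
            - G₀.Q K S F₁ * G₀.Q K (S ∪ {w}) Set.univ ≤ 0 := by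
          linarith [G₀.monZ_of_cpa cpaS w hF₁]
        have hbr₂ : G₀.Q K (S ∪ {w}) F₂ * G₀.Q K S Set.univ
            - G₀.Q K S F₂ * G₀.Q K (S ∪ {w}) Set.univ ≤ 0 := by
          linarith [G₀.monZ_of_cpa cpaS w hF₂]
        apply cross_aligned (G₀.Q_nonneg hG₀ _ _ _) (G₀.Q_nonneg hG₀ _ _ _)
          (G₀.Q_nonneg hG₀ _ _ _) (G₀.Q_nonneg hG₀ _ _ _) (G₀.Q_nonneg hG₀ _ _ _)
          (G₀.Q_nonneg hG₀ _ _ _) (G₀.Q_nonneg hG₀ _ _ _) (G₀.Q_nonneg hG₀ _ _ _)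
          (G₀.Q_le_B hG₀ _ _ _) (G₀.Q_le_B hG₀ _ _ _) (G₀.Q_le_B hG₀ _ _ _)
          (G₀.Q_le_B hG₀ _ _ _) (G₀.Q_le_B hG₀ _ _ _) (G₀.Q_le_B hG₀ _ _ _)
          (cpaW F₁ F₂ hF₁ hF₂) (cpaS F₁ F₂ hF₁ hF₂)
          (by nlinarith [mul_nonneg (neg_nonneg.2 hbr₁) (neg_nonneg.2 hbr₂)])
    by_cases hfK : ∃ e, (G.p e ≠ 0 ∧ G.p e ≠ 1) ∧ ((G.ends e).1 ∈ K ∨ (G.ends e).2 ∈ K)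
    · -- pin a free edge touching K
      obtain ⟨e, hefree, hetouch⟩ := hfK
      obtain ⟨x, v, hor, hx⟩ := G.touch_orient hetouch
      set G₁ := G.withEdgeProb e 1 with hG₁def
      set G₀ := G.withEdgeProb e 0 with hG₀def
      have hG₁ : G₁.ProbValid := G.valid_withEdgeProb hG e zero_le_one le_rfl
      have hG₀ : G₀.ProbValid := G.valid_withEdgeProb hG e le_rfl zero_le_one
      have hlt₀ : G₀.freeC < n :=
        lt_of_lt_of_le (G.freeC_pin_lt hefree (Or.inl rfl)) hfree
      have hends : (G.ends e).1 ∈ K ∪ {v} ∧ (G.ends e).2 ∈ K ∪ {v} :=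
        G.ends_mem_of_orient hor (Or.inl hx) (Or.inr rfl)
      obtain ⟨cpa₀, monA₀, -⟩ :=
        ihn G₀.freeC hlt₀ (measK G K + measK G S) G₀ hG₀ le_rfl
      have hmono : measK G₀ (K ∪ {v}) + measK G₀ S ≤ measK G K + measK G S := by
        rw [measK_withEdgeProb, measK_withEdgeProb]
        exact add_le_add (G.measK_mono Set.subset_union_left) le_rfl
      have hsame : measK G₀ K + measK G₀ S ≤ measK G K + measK G S := by
        rw [measK_withEdgeProb, measK_withEdgeProb]
      have cpaV : G₀.CPAat (K ∪ {v}) S := cpa₀ (K ∪ {v}) S hmono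
      have cpaS : G₀.CPAat K S := cpa₀ K S hsame
      have monKV : G₀.MonAat K (K ∪ {v}) S :=
        monA₀ K (K ∪ {v}) S Set.subset_union_left hsame
      have hred : ∀ X : Set (Set V),
          G.Q K S X = G.p e * G₀.Q (K ∪ {v}) S X + (1 - G.p e) * G₀.Q K S X := by
        intro X
        rw [G.Q_pin e K S X]
        congr 2
        have hor₁ : G₁.ends e = (x, v) ∨ G₁.ends e = (v, x) := by
          exact hor
        rw [G₁.Q_seed_extend (by simp [hG₁def]) hor₁ hx S X]
        exact G.Q_flip_seed hends.1 hends.2 S X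
      have hq : 0 ≤ 1 - G.p e := by linarith [(hG e).2]
      have hp : 0 ≤ G.p e := (hG e).1
      rw [hred F₁, hred F₂, hred (F₁ ∩ F₂), hred Set.univ]
      apply pin_combine hp hq
      · exact cpaV F₁ F₂ hF₁ hF₂
      · exact cpaS F₁ F₂ hF₁ hF₂
      · have hbr₁ : 0 ≤ G₀.Q (K ∪ {v}) S F₁ * G₀.Q K S Set.univ
            - G₀.Q K S F₁ * G₀.Q (K ∪ {v}) S Set.univ := by
          linarith [monKV F₁ hF₁]
        have hbr₂ : 0 ≤ G₀.Q (K ∪ {v}) S F₂ * G₀.Q K S Set.univ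
            - G₀.Q K S F₂ * G₀.Q (K ∪ {v}) S Set.univ := by
          linarith [monKV F₂ hF₂]
        apply cross_aligned (G₀.Q_nonneg hG₀ _ _ _) (G₀.Q_nonneg hG₀ _ _ _)
          (G₀.Q_nonneg hG₀ _ _ _) (G₀.Q_nonneg hG₀ _ _ _) (G₀.Q_nonneg hG₀ _ _ _)
          (G₀.Q_nonneg hG₀ _ _ _) (G₀.Q_nonneg hG₀ _ _ _) (G₀.Q_nonneg hG₀ _ _ _)
          (G₀.Q_le_B hG₀ _ _ _) (G₀.Q_le_B hG₀ _ _ _) (G₀.Q_le_B hG₀ _ _ _)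
          (G₀.Q_le_B hG₀ _ _ _) (G₀.Q_le_B hG₀ _ _ _) (G₀.Q_le_B hG₀ _ _ _)
          (cpaV F₁ F₂ hF₁ hF₂) (cpaS F₁ F₂ hF₁ hF₂)
          (mul_nonneg hbr₁ hbr₂)
    by_cases hcl : ∃ e x v, (G.ends e = (x, v) ∨ G.ends e = (v, x)) ∧
        G.p e = 1 ∧ x ∈ K ∧ v ∉ K
    · -- closure move
      obtain ⟨e, x, v, hor, hpe, hx, hv⟩ := hcl
      have hred : ∀ X : Set (Set V), G.Q K S X = G.Q (K ∪ {v}) S X :=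
        fun X => G.Q_seed_extend hpe hor hx S X
      rw [hred F₁, hred F₂, hred (F₁ ∩ F₂), hred Set.univ]
      have hlt : measK G (K ∪ {v}) + measK G S < m :=
        lt_of_lt_of_le (by
          have := G.measK_lt hor hx hv
          omega) hm
      exact (ihm _ hlt G hG hfree).1 (K ∪ {v}) S le_rfl F₁ F₂ hF₁ hF₂
    · -- base case : K is quiet
      push_neg at hfS hfK hcl
      have hq : G.Quiet K := by
        intro e hp0
        by_cases h1 : (G.ends e).1 ∈ K
        · by_cases h2 : (G.ends e).2 ∈ K
          · simp [h1, h2]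
          · exfalso
            have hp1 : G.p e = 1 := by
              by_contra hne
              exact (hfK e ⟨hp0, hne⟩).1 h1
            exact h2 (hcl e (G.ends e).1 (G.ends e).2 (Or.inl Prod.mk.eta.symm) hp1 h1)
        · by_cases h2 : (G.ends e).2 ∈ K
          · exfalso
            have hp1 : G.p e = 1 := by
              by_contra hne
              exact (hfK e ⟨hp0, hne⟩).2 h2
            exact h1 (hcl e (G.ends e).2 (G.ends e).1 (Or.inr Prod.mk.eta.symm) hp1 h2)
          · simp [h1, h2]
      have hKS : K ∩ S = ∅ := Set.not_nonempty_iff_eq_empty.mp hdeg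
      by_cases hKF₁ : K ∈ F₁
      · by_cases hKF₂ : K ∈ F₂
        · rw [G.Q_det_one hG hq hKF₁ hKS, G.Q_det_one hG hq hKF₂ hKS,
            G.Q_det_one hG hq (Set.mem_inter hKF₁ hKF₂) hKS,
            G.Q_det_one hG hq (Set.mem_univ K) hKS]
        · rw [G.Q_det_zero hq hKF₂]
          simp only [mul_zero]
          exact mul_nonneg (G.Q_nonneg hG _ _ _) (G.Q_nonneg hG _ _ _)
      · rw [G.Q_det_zero hq hKF₁]
        simp only [zero_mul]
        exact mul_nonneg (G.Q_nonneg hG _ _ _) (G.Q_nonneg hG _ _ _)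
  · -- MonA part
    intro K K' S hKK' hm F hF
    by_cases hdeg : (K' ∩ S).Nonempty
    · have hKd : G.Q K' S F = 0 := G.Q_zero_of_inter hdeg F
      have hKd2 : G.Q K' S Set.univ = 0 := G.Q_zero_of_inter hdeg Set.univ
      rw [hKd, hKd2]
      simp
    by_cases hfS : ∃ e, (G.p e ≠ 0 ∧ G.p e ≠ 1) ∧ ((G.ends e).1 ∈ S ∨ (G.ends e).2 ∈ S)
    · obtain ⟨e, hefree, hetouch⟩ := hfS
      obtain ⟨z, w, hor, hz⟩ := G.touch_orient hetouch
      set G₁ := G.withEdgeProb e 1 with hG₁def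
      set G₀ := G.withEdgeProb e 0 with hG₀def
      have hG₁ : G₁.ProbValid := G.valid_withEdgeProb hG e zero_le_one le_rfl
      have hG₀ : G₀.ProbValid := G.valid_withEdgeProb hG e le_rfl zero_le_one
      have hlt₀ : G₀.freeC < n :=
        lt_of_lt_of_le (G.freeC_pin_lt hefree (Or.inl rfl)) hfree
      have hends : (G.ends e).1 ∈ S ∪ {w} ∧ (G.ends e).2 ∈ S ∪ {w} :=
        G.ends_mem_of_orient hor (Or.inl hz) (Or.inr rfl)
      obtain ⟨cpa₀, monA₀, -⟩ :=
        ihn G₀.freeC hlt₀ (measK G K + measK G S) G₀ hG₀ le_rfl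
      have hmono : measK G₀ K + measK G₀ (S ∪ {w}) ≤ measK G K + measK G S := by
        rw [measK_withEdgeProb, measK_withEdgeProb]
        exact add_le_add le_rfl (G.measK_mono Set.subset_union_left)
      have hsame : measK G₀ K + measK G₀ S ≤ measK G K + measK G S := by
        rw [measK_withEdgeProb, measK_withEdgeProb]
      have monW : G₀.MonAat K K' (S ∪ {w}) := monA₀ K K' (S ∪ {w}) hKK' hmono
      have monS : G₀.MonAat K K' S := monA₀ K K' S hKK' hsame
      have cpaS : G₀.CPAat K S := cpa₀ K S hsame
      have hredK : ∀ (T : Set V) (X : Set (Set V)),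
          G.Q T S X = G.p e * G₀.Q T (S ∪ {w}) X + (1 - G.p e) * G₀.Q T S X := by
        intro T X
        rw [G.Q_pin e T S X]
        congr 2
        have hor₁ : G₁.ends e = (z, w) ∨ G₁.ends e = (w, z) := by exact hor
        rw [G₁.Q_avoid_extend (by simp [hG₁def]) hor₁ hz T X]
        exact G.Q_flip_avoid hends.1 hends.2 T X
      have hq : 0 ≤ 1 - G.p e := by linarith [(hG e).2]
      have hp : 0 ≤ G.p e := (hG e).1
      rw [hredK K F, hredK K' Set.univ, hredK K' F, hredK K Set.univ]
      apply pin_combine hp hq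
      · exact monW F hF
      · exact monS F hF
      · exact crossMa (G₀.Q_nonneg hG₀ _ _ _) (G₀.Q_nonneg hG₀ _ _ _)
          (G₀.Q_nonneg hG₀ _ _ _) (G₀.Q_nonneg hG₀ _ _ _)
          (G₀.Q_nonneg hG₀ _ _ _) (G₀.Q_nonneg hG₀ _ _ _)
          (G₀.Q_nonneg hG₀ _ _ _) (G₀.Q_nonneg hG₀ _ _ _)
          (G₀.Q_le_B hG₀ _ _ _) (G₀.Q_le_B hG₀ _ _ _)
          (G₀.Q_le_B hG₀ _ _ _) (G₀.Q_le_B hG₀ _ _ _)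
          (G₀.Q_mono_avoid hG₀ K' Set.subset_union_left Set.univ)
          (G₀.B_mono_seed hG₀ hKK' (S ∪ {w}))
          (G₀.Q_mono_avoid hG₀ K Set.subset_union_left Set.univ)
          (G₀.B_mono_seed hG₀ hKK' S)
          (monW F hF) (monS F hF)
          (G₀.monZ_of_cpa cpaS w hF)
          (G₀.px_of_monA monS w)
    by_cases hfK : ∃ e, (G.p e ≠ 0 ∧ G.p e ≠ 1) ∧ ((G.ends e).1 ∈ K ∨ (G.ends e).2 ∈ K)
    · obtain ⟨e, hefree, hetouch⟩ := hfK
      obtain ⟨x, v, hor, hx⟩ := G.touch_orient hetouch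
      set G₁ := G.withEdgeProb e 1 with hG₁def
      set G₀ := G.withEdgeProb e 0 with hG₀def
      have hG₁ : G₁.ProbValid := G.valid_withEdgeProb hG e zero_le_one le_rfl
      have hG₀ : G₀.ProbValid := G.valid_withEdgeProb hG e le_rfl zero_le_one
      have hlt₀ : G₀.freeC < n :=
        lt_of_lt_of_le (G.freeC_pin_lt hefree (Or.inl rfl)) hfree
      obtain ⟨cpa₀, monA₀, -⟩ :=
        ihn G₀.freeC hlt₀ (measK G K + measK G S) G₀ hG₀ le_rfl
      have hbase : measK G₀ K + measK G₀ S ≤ measK G K + measK G S := by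
        rw [measK_withEdgeProb, measK_withEdgeProb]
      have hmono1 : measK G₀ (K ∪ {v}) + measK G₀ S ≤ measK G K + measK G S := by
        rw [measK_withEdgeProb, measK_withEdgeProb]
        exact add_le_add (G.measK_mono Set.subset_union_left) le_rfl
      have hswap : measK G₀ S + measK G₀ K ≤ measK G K + measK G S := by
        rw [measK_withEdgeProb, measK_withEdgeProb, add_comm]
      have monVV : G₀.MonAat (K ∪ {v}) (K' ∪ {v}) S :=
        monA₀ (K ∪ {v}) (K' ∪ {v}) S (Set.union_subset_union_left _ hKK') hmono1
      have monS : G₀.MonAat K K' S := monA₀ K K' S hKK' hbase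
      have monKV : G₀.MonAat K (K ∪ {v}) S :=
        monA₀ K (K ∪ {v}) S Set.subset_union_left hbase
      have cpaSK : G₀.CPAat S K := cpa₀ S K hswap
      have hredT : ∀ (T : Set V), x ∈ T → ∀ X : Set (Set V),
          G.Q T S X = G.p e * G₀.Q (T ∪ {v}) S X + (1 - G.p e) * G₀.Q T S X := by
        intro T hxT X
        rw [G.Q_pin e T S X]
        congr 2
        have hor₁ : G₁.ends e = (x, v) ∨ G₁.ends e = (v, x) := by exact hor
        rw [G₁.Q_seed_extend (by simp [hG₁def]) hor₁ hxT S X]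
        exact G.Q_flip_seed
          (G.ends_mem_of_orient hor (Or.inl hxT) (Or.inr rfl)).1
          (G.ends_mem_of_orient hor (Or.inl hxT) (Or.inr rfl)).2 S X
      have hq : 0 ≤ 1 - G.p e := by linarith [(hG e).2]
      have hp : 0 ≤ G.p e := (hG e).1
      rw [hredT K hx F, hredT K' (hKK' hx) Set.univ, hredT K' (hKK' hx) F,
        hredT K hx Set.univ]
      apply pin_combine hp hq
      · exact monVV F hF
      · exact monS F hF
      · exact crossMb (G₀.Q_nonneg hG₀ _ _ _) (G₀.Q_nonneg hG₀ _ _ _)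
          (G₀.Q_nonneg hG₀ _ _ _) (G₀.Q_nonneg hG₀ _ _ _)
          (G₀.Q_nonneg hG₀ _ _ _) (G₀.Q_nonneg hG₀ _ _ _)
          (G₀.Q_nonneg hG₀ _ _ _) (G₀.Q_nonneg hG₀ _ _ _)
          (G₀.Q_le_B hG₀ _ _ _) (G₀.Q_le_B hG₀ _ _ _)
          (G₀.Q_le_B hG₀ _ _ _) (G₀.Q_le_B hG₀ _ _ _)
          (G₀.B_mono_seed hG₀ Set.subset_union_left S)
          (G₀.B_mono_seed hG₀ (Set.union_subset_union_left _ hKK') S)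
          (G₀.B_mono_seed hG₀ Set.subset_union_left S)
          (G₀.B_mono_seed hG₀ hKK' S)
          (monVV F hF) (monS F hF)
          (monKV F hF)
          (G₀.p2_of_cpa hKK' cpaSK v)
          (fun h => G₀.B_zero_dichotomy hG₀ v K h)
    by_cases hcl : ∃ e x v, (G.ends e = (x, v) ∨ G.ends e = (v, x)) ∧
        G.p e = 1 ∧ x ∈ K ∧ v ∉ K
    · obtain ⟨e, x, v, hor, hpe, hx, hv⟩ := hcl
      have hr1 : ∀ X : Set (Set V), G.Q K S X = G.Q (K ∪ {v}) S X :=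
        fun X => G.Q_seed_extend hpe hor hx S X
      have hr2 : ∀ X : Set (Set V), G.Q K' S X = G.Q (K' ∪ {v}) S X :=
        fun X => G.Q_seed_extend hpe hor (hKK' hx) S X
      rw [hr1 F, hr1 Set.univ, hr2 F, hr2 Set.univ]
      have hlt : measK G (K ∪ {v}) + measK G S < m :=
        lt_of_lt_of_le (by
          have := G.measK_lt hor hx hv
          omega) hm
      exact (ihm _ hlt G hG hfree).2.1 (K ∪ {v}) (K' ∪ {v}) S
        (Set.union_subset_union_left _ hKK') le_rfl F hF
    · push_neg at hfS hfK hcl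
      have hqt : G.Quiet K := by
        intro e hp0
        by_cases h1 : (G.ends e).1 ∈ K
        · by_cases h2 : (G.ends e).2 ∈ K
          · simp [h1, h2]
          · exfalso
            have hp1 : G.p e = 1 := by
              by_contra hne
              exact (hfK e ⟨hp0, hne⟩).1 h1
            exact h2 (hcl e (G.ends e).1 (G.ends e).2 (Or.inl Prod.mk.eta.symm) hp1 h1)
        · by_cases h2 : (G.ends e).2 ∈ K
          · exfalso
            have hp1 : G.p e = 1 := by
              by_contra hne
              exact (hfK e ⟨hp0, hne⟩).2 h2
            exact h1 (hcl e (G.ends e).2 (G.ends e).1 (Or.inr Prod.mk.eta.symm) hp1 h2)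
          · simp [h1, h2]
      have hKS : K ∩ S = ∅ := by
        have h' : K' ∩ S = ∅ := Set.not_nonempty_iff_eq_empty.mp hdeg
        rw [Set.eq_empty_iff_forall_notMem] at h' ⊢
        exact fun v hv => h' v ⟨hKK' hv.1, hv.2⟩
      by_cases hKF : K ∈ F
      · rw [G.Q_det_one hG hqt hKF hKS, G.Q_det_one hG hqt (Set.mem_univ K) hKS,
          G.Q_eq_B_of_seed_mem hKK' hF hKF]
        rw [one_mul, mul_one]
      · rw [G.Q_det_zero hqt hKF]
        simp only [zero_mul]
        exact mul_nonneg (G.Q_nonneg hG _ _ _) (G.Q_nonneg hG _ _ _)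
  · -- N part
    intro K₁ K₂ hm F₁ F₂ hF₁ hF₂
    by_cases hdeg : (K₁ ∩ K₂).Nonempty
    · simp [G.NQ_zero_of_inter hdeg]
    by_cases hfK₁ : ∃ e, (G.p e ≠ 0 ∧ G.p e ≠ 1) ∧
        ((G.ends e).1 ∈ K₁ ∨ (G.ends e).2 ∈ K₁)
    · obtain ⟨e, hefree, hetouch⟩ := hfK₁
      obtain ⟨x, v, hor, hx⟩ := G.touch_orient hetouch
      set G₁ := G.withEdgeProb e 1 with hG₁def
      set G₀ := G.withEdgeProb e 0 with hG₀def
      have hG₁ : G₁.ProbValid := G.valid_withEdgeProb hG e zero_le_one le_rfl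
      have hG₀ : G₀.ProbValid := G.valid_withEdgeProb hG e le_rfl zero_le_one
      have hlt₁ : G₁.freeC < n :=
        lt_of_lt_of_le (G.freeC_pin_lt hefree (Or.inr rfl)) hfree
      have hlt₀ : G₀.freeC < n :=
        lt_of_lt_of_le (G.freeC_pin_lt hefree (Or.inl rfl)) hfree
      have hends : (G.ends e).1 ∈ K₁ ∪ {v} ∧ (G.ends e).2 ∈ K₁ ∪ {v} :=
        G.ends_mem_of_orient hor (Or.inl hx) (Or.inr rfl)
      obtain ⟨-, -, nat₁⟩ :=
        ihn G₁.freeC hlt₁ (measK G K₁ + measK G K₂) G₁ hG₁ le_rfl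
      obtain ⟨cpa₀, monA₀, nat₀⟩ :=
        ihn G₀.freeC hlt₀ (measK G K₁ + measK G K₂) G₀ hG₀ le_rfl
      have hm1 : measK G₁ (K₁ ∪ {v}) + measK G₁ K₂ ≤ measK G K₁ + measK G K₂ := by
        rw [measK_withEdgeProb, measK_withEdgeProb]
        exact add_le_add (G.measK_mono Set.subset_union_left) le_rfl
      have hm0 : measK G₀ K₁ + measK G₀ K₂ ≤ measK G K₁ + measK G K₂ := by
        rw [measK_withEdgeProb, measK_withEdgeProb]
      have hm0' : measK G₀ K₂ + measK G₀ K₁ ≤ measK G K₁ + measK G K₂ := by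
        rw [measK_withEdgeProb, measK_withEdgeProb, add_comm]
      have hm0v : measK G₀ K₁ + measK G₀ K₂ ≤ measK G K₁ + measK G K₂ := hm0
      have natV : G₁.NAat (K₁ ∪ {v}) K₂ := nat₁ (K₁ ∪ {v}) K₂ hm1
      have natO : G₀.NAat K₁ K₂ := nat₀ K₁ K₂ hm0
      have monAv : G₀.MonAat K₁ (K₁ ∪ {v}) K₂ :=
        monA₀ K₁ (K₁ ∪ {v}) K₂ Set.subset_union_left hm0v
      have cpa21 : G₀.CPAat K₂ K₁ := cpa₀ K₂ K₁ hm0'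
      have hred : ∀ Fa Fb : Set (Set V),
          G.NQ K₁ K₂ Fa Fb = G.p e * G₁.NQ (K₁ ∪ {v}) K₂ Fa Fb
            + (1 - G.p e) * G₀.NQ K₁ K₂ Fa Fb := by
        intro Fa Fb
        rw [G.NQ_pin e K₁ K₂ Fa Fb]
        congr 2
        have hor₁ : G₁.ends e = (x, v) ∨ G₁.ends e = (v, x) := by exact hor
        exact G₁.NQ_seed1_extend (by simp [hG₁def]) hor₁ hx K₂ Fa Fb
      have hq : 0 ≤ 1 - G.p e := by linarith [(hG e).2]
      have hp : 0 ≤ G.p e := (hG e).1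
      -- translation equalities
      have tC1 : G₁.NQ (K₁ ∪ {v}) K₂ F₁ Set.univ = G₀.Q (K₁ ∪ {v}) K₂ F₁ := by
        rw [NQ_one_univ]
        exact G.Q_flip_seed hends.1 hends.2 K₂ F₁
      have tB1 : G₁.NQ (K₁ ∪ {v}) K₂ Set.univ Set.univ = G₀.Q (K₁ ∪ {v}) K₂ Set.univ := by
        rw [NQ_univ_univ]
        exact G.Q_flip_seed hends.1 hends.2 K₂ Set.univ
      have tD1 : G₁.NQ (K₁ ∪ {v}) K₂ Set.univ F₂ = G₀.Q K₂ (K₁ ∪ {v}) F₂ := by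
        rw [NQ_two_univ]
        exact G.Q_flip_avoid hends.1 hends.2 K₂ F₂
      have tC0 : G₀.NQ K₁ K₂ F₁ Set.univ = G₀.Q K₁ K₂ F₁ := G₀.NQ_one_univ K₁ K₂ F₁
      have tB0 : G₀.NQ K₁ K₂ Set.univ Set.univ = G₀.Q K₁ K₂ Set.univ :=
        G₀.NQ_univ_univ K₁ K₂
      have tD0 : G₀.NQ K₁ K₂ Set.univ F₂ = G₀.Q K₂ K₁ F₂ := G₀.NQ_two_univ K₁ K₂ F₂
      have hbr1 : 0 ≤ G₁.NQ (K₁ ∪ {v}) K₂ F₁ Set.univ * G₀.NQ K₁ K₂ Set.univ Set.univ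
          - G₀.NQ K₁ K₂ F₁ Set.univ * G₁.NQ (K₁ ∪ {v}) K₂ Set.univ Set.univ := by
        rw [tC1, tB0, tC0, tB1]
        linarith [monAv F₁ hF₁]
      have hbr2 : G₁.NQ (K₁ ∪ {v}) K₂ Set.univ F₂ * G₀.NQ K₁ K₂ Set.univ Set.univ
          - G₀.NQ K₁ K₂ Set.univ F₂ * G₁.NQ (K₁ ∪ {v}) K₂ Set.univ Set.univ ≤ 0 := by
        rw [tD1, tD0, tB0, tB1, G₀.Q_symm_univ K₁ K₂, G₀.Q_symm_univ (K₁ ∪ {v}) K₂]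
        linarith [G₀.monZ_of_cpa cpa21 v hF₂]
      rw [hred F₁ F₂, hred Set.univ Set.univ, hred F₁ Set.univ, hred Set.univ F₂]
      apply pin_combine hp hq
      · exact natV F₁ F₂ hF₁ hF₂
      · exact natO F₁ F₂ hF₁ hF₂
      · apply cross_aligned_le (G₁.NQ_nonneg hG₁ _ _ _ _) (G₀.NQ_nonneg hG₀ _ _ _ _)
          (G₁.NQ_nonneg hG₁ _ _ _ _) (G₀.NQ_nonneg hG₀ _ _ _ _)
          (G₁.NQ_nonneg hG₁ _ _ _ _) (G₀.NQ_nonneg hG₀ _ _ _ _)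
          (G₁.NQ_nonneg hG₁ _ _ _ _) (G₀.NQ_nonneg hG₀ _ _ _ _)
          (G₁.NQ_le hG₁ _ _ _ _) (G₁.NQ_le hG₁ _ _ _ _) (G₁.NQ_le hG₁ _ _ _ _)
          (G₀.NQ_le hG₀ _ _ _ _) (G₀.NQ_le hG₀ _ _ _ _) (G₀.NQ_le hG₀ _ _ _ _)
          (natV F₁ F₂ hF₁ hF₂) (natO F₁ F₂ hF₁ hF₂)
          (by nlinarith [mul_nonneg hbr1 (neg_nonneg.2 hbr2)])
    by_cases hfK₂ : ∃ e, (G.p e ≠ 0 ∧ G.p e ≠ 1) ∧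
        ((G.ends e).1 ∈ K₂ ∨ (G.ends e).2 ∈ K₂)
    · obtain ⟨e, hefree, hetouch⟩ := hfK₂
      obtain ⟨x, v, hor, hx⟩ := G.touch_orient hetouch
      set G₁ := G.withEdgeProb e 1 with hG₁def
      set G₀ := G.withEdgeProb e 0 with hG₀def
      have hG₁ : G₁.ProbValid := G.valid_withEdgeProb hG e zero_le_one le_rfl
      have hG₀ : G₀.ProbValid := G.valid_withEdgeProb hG e le_rfl zero_le_one
      have hlt₁ : G₁.freeC < n :=
        lt_of_lt_of_le (G.freeC_pin_lt hefree (Or.inr rfl)) hfree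
      have hlt₀ : G₀.freeC < n :=
        lt_of_lt_of_le (G.freeC_pin_lt hefree (Or.inl rfl)) hfree
      have hends : (G.ends e).1 ∈ K₂ ∪ {v} ∧ (G.ends e).2 ∈ K₂ ∪ {v} :=
        G.ends_mem_of_orient hor (Or.inl hx) (Or.inr rfl)
      obtain ⟨-, -, nat₁⟩ :=
        ihn G₁.freeC hlt₁ (measK G K₁ + measK G K₂) G₁ hG₁ le_rfl
      obtain ⟨cpa₀, monA₀, nat₀⟩ :=
        ihn G₀.freeC hlt₀ (measK G K₁ + measK G K₂) G₀ hG₀ le_rfl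
      have hm1 : measK G₁ K₁ + measK G₁ (K₂ ∪ {v}) ≤ measK G K₁ + measK G K₂ := by
        rw [measK_withEdgeProb, measK_withEdgeProb]
        exact add_le_add le_rfl (G.measK_mono Set.subset_union_left)
      have hm0 : measK G₀ K₁ + measK G₀ K₂ ≤ measK G K₁ + measK G K₂ := by
        rw [measK_withEdgeProb, measK_withEdgeProb]
      have hm0' : measK G₀ K₂ + measK G₀ K₁ ≤ measK G K₁ + measK G K₂ := by
        rw [measK_withEdgeProb, measK_withEdgeProb, add_comm]
      have natV : G₁.NAat K₁ (K₂ ∪ {v}) := nat₁ K₁ (K₂ ∪ {v}) hm1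
      have natO : G₀.NAat K₁ K₂ := nat₀ K₁ K₂ hm0
      have monAv : G₀.MonAat K₂ (K₂ ∪ {v}) K₁ :=
        monA₀ K₂ (K₂ ∪ {v}) K₁ Set.subset_union_left hm0'
      have cpa12 : G₀.CPAat K₁ K₂ := cpa₀ K₁ K₂ hm0
      have hred : ∀ Fa Fb : Set (Set V),
          G.NQ K₁ K₂ Fa Fb = G.p e * G₁.NQ K₁ (K₂ ∪ {v}) Fa Fb
            + (1 - G.p e) * G₀.NQ K₁ K₂ Fa Fb := by
        intro Fa Fb
        rw [G.NQ_pin e K₁ K₂ Fa Fb]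
        congr 2
        have hor₁ : G₁.ends e = (x, v) ∨ G₁.ends e = (v, x) := by exact hor
        exact G₁.NQ_seed2_extend (by simp [hG₁def]) hor₁ hx K₁ Fa Fb
      have hq : 0 ≤ 1 - G.p e := by linarith [(hG e).2]
      have hp : 0 ≤ G.p e := (hG e).1
      have tC1 : G₁.NQ K₁ (K₂ ∪ {v}) F₁ Set.univ = G₀.Q K₁ (K₂ ∪ {v}) F₁ := by
        rw [NQ_one_univ]
        exact G.Q_flip_avoid hends.1 hends.2 K₁ F₁
      have tB1 : G₁.NQ K₁ (K₂ ∪ {v}) Set.univ Set.univ = G₀.Q K₁ (K₂ ∪ {v}) Set.univ := by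
        rw [NQ_univ_univ]
        exact G.Q_flip_avoid hends.1 hends.2 K₁ Set.univ
      have tD1 : G₁.NQ K₁ (K₂ ∪ {v}) Set.univ F₂ = G₀.Q (K₂ ∪ {v}) K₁ F₂ := by
        rw [NQ_two_univ]
        exact G.Q_flip_seed hends.1 hends.2 K₁ F₂
      have tC0 : G₀.NQ K₁ K₂ F₁ Set.univ = G₀.Q K₁ K₂ F₁ := G₀.NQ_one_univ K₁ K₂ F₁
      have tB0 : G₀.NQ K₁ K₂ Set.univ Set.univ = G₀.Q K₁ K₂ Set.univ :=
        G₀.NQ_univ_univ K₁ K₂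
      have tD0 : G₀.NQ K₁ K₂ Set.univ F₂ = G₀.Q K₂ K₁ F₂ := G₀.NQ_two_univ K₁ K₂ F₂
      have hbr1 : G₁.NQ K₁ (K₂ ∪ {v}) F₁ Set.univ * G₀.NQ K₁ K₂ Set.univ Set.univ
          - G₀.NQ K₁ K₂ F₁ Set.univ * G₁.NQ K₁ (K₂ ∪ {v}) Set.univ Set.univ ≤ 0 := by
        rw [tC1, tB0, tC0, tB1]
        linarith [G₀.monZ_of_cpa cpa12 v hF₁]
      have hbr2 : 0 ≤ G₁.NQ K₁ (K₂ ∪ {v}) Set.univ F₂ * G₀.NQ K₁ K₂ Set.univ Set.univ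
          - G₀.NQ K₁ K₂ Set.univ F₂ * G₁.NQ K₁ (K₂ ∪ {v}) Set.univ Set.univ := by
        rw [tD1, tD0, tB0, tB1, G₀.Q_symm_univ K₁ K₂, G₀.Q_symm_univ K₁ (K₂ ∪ {v})]
        linarith [monAv F₂ hF₂]
      rw [hred F₁ F₂, hred Set.univ Set.univ, hred F₁ Set.univ, hred Set.univ F₂]
      apply pin_combine hp hq
      · exact natV F₁ F₂ hF₁ hF₂
      · exact natO F₁ F₂ hF₁ hF₂
      · apply cross_aligned_le (G₁.NQ_nonneg hG₁ _ _ _ _) (G₀.NQ_nonneg hG₀ _ _ _ _)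
          (G₁.NQ_nonneg hG₁ _ _ _ _) (G₀.NQ_nonneg hG₀ _ _ _ _)
          (G₁.NQ_nonneg hG₁ _ _ _ _) (G₀.NQ_nonneg hG₀ _ _ _ _)
          (G₁.NQ_nonneg hG₁ _ _ _ _) (G₀.NQ_nonneg hG₀ _ _ _ _)
          (G₁.NQ_le hG₁ _ _ _ _) (G₁.NQ_le hG₁ _ _ _ _) (G₁.NQ_le hG₁ _ _ _ _)
          (G₀.NQ_le hG₀ _ _ _ _) (G₀.NQ_le hG₀ _ _ _ _) (G₀.NQ_le hG₀ _ _ _ _)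
          (natV F₁ F₂ hF₁ hF₂) (natO F₁ F₂ hF₁ hF₂)
          (by nlinarith [mul_nonneg hbr2 (neg_nonneg.2 hbr1)])
    by_cases hcl₁ : ∃ e x v, (G.ends e = (x, v) ∨ G.ends e = (v, x)) ∧
        G.p e = 1 ∧ x ∈ K₁ ∧ v ∉ K₁
    · obtain ⟨e, x, v, hor, hpe, hx, hv⟩ := hcl₁
      have hr : ∀ Fa Fb : Set (Set V), G.NQ K₁ K₂ Fa Fb = G.NQ (K₁ ∪ {v}) K₂ Fa Fb :=
        fun Fa Fb => G.NQ_seed1_extend hpe hor hx K₂ Fa Fb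
      rw [hr F₁ F₂, hr Set.univ Set.univ, hr F₁ Set.univ, hr Set.univ F₂]
      have hlt : measK G (K₁ ∪ {v}) + measK G K₂ < m :=
        lt_of_lt_of_le (by
          have := G.measK_lt hor hx hv
          omega) hm
      exact (ihm _ hlt G hG hfree).2.2 (K₁ ∪ {v}) K₂ le_rfl F₁ F₂ hF₁ hF₂
    by_cases hcl₂ : ∃ e x v, (G.ends e = (x, v) ∨ G.ends e = (v, x)) ∧
        G.p e = 1 ∧ x ∈ K₂ ∧ v ∉ K₂
    · obtain ⟨e, x, v, hor, hpe, hx, hv⟩ := hcl₂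
      have hr : ∀ Fa Fb : Set (Set V), G.NQ K₁ K₂ Fa Fb = G.NQ K₁ (K₂ ∪ {v}) Fa Fb :=
        fun Fa Fb => G.NQ_seed2_extend hpe hor hx K₁ Fa Fb
      rw [hr F₁ F₂, hr Set.univ Set.univ, hr F₁ Set.univ, hr Set.univ F₂]
      have hlt : measK G K₁ + measK G (K₂ ∪ {v}) < m :=
        lt_of_lt_of_le (by
          have := G.measK_lt hor hx hv
          omega) hm
      exact (ihm _ hlt G hG hfree).2.2 K₁ (K₂ ∪ {v}) le_rfl F₁ F₂ hF₁ hF₂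
    · push_neg at hfK₁ hcl₁
      have hqt : G.Quiet K₁ := by
        intro e hp0
        by_cases h1 : (G.ends e).1 ∈ K₁
        · by_cases h2 : (G.ends e).2 ∈ K₁
          · simp [h1, h2]
          · exfalso
            have hp1 : G.p e = 1 := by
              by_contra hne
              exact (hfK₁ e ⟨hp0, hne⟩).1 h1
            exact h2 (hcl₁ e (G.ends e).1 (G.ends e).2 (Or.inl Prod.mk.eta.symm) hp1 h1)
        · by_cases h2 : (G.ends e).2 ∈ K₁
          · exfalso
            have hp1 : G.p e = 1 := by
              by_contra hne
              exact (hfK₁ e ⟨hp0, hne⟩).2 h2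
            exact h1 (hcl₁ e (G.ends e).2 (G.ends e).1 (Or.inr Prod.mk.eta.symm) hp1 h2)
          · simp [h1, h2]
      have hdisj : K₁ ∩ K₂ = ∅ := Set.not_nonempty_iff_eq_empty.mp hdeg
      by_cases hmem : K₁ ∈ F₁
      · rw [G.NQ_det1_mem hG hqt hdisj hmem F₂, G.NQ_det1_mem hG hqt hdisj hmem Set.univ]
        exact le_of_eq (mul_comm _ _)
      · rw [G.NQ_det1_not_mem hqt hmem F₂, G.NQ_det1_not_mem hqt hmem Set.univ]
        simp

/-! ### Extraction of the correlation inequalities -/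

theorem cpa_all (G : PercGraph V E) (hG : G.ProbValid) (K S : Set V) : G.CPAat K S :=
  (master G.freeC (measK G K + measK G S) G hG le_rfl).1 K S le_rfl

theorem na_all (G : PercGraph V E) (hG : G.ProbValid) (K₁ K₂ : Set V) : G.NAat K₁ K₂ :=
  (master G.freeC (measK G K₁ + measK G K₂) G hG le_rfl).2.2 K₁ K₂ le_rfl

section Translate

variable (G : PercGraph V E)

lemma mem_cluster_single (ω : E → Bool) (a u : V) :
    u ∈ G.cluster ω {a} ↔ G.Conn ω a u := by
  simp [cluster]

lemma avoid_cluster_single (ω : E → Bool) (a z : V) :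
    G.cluster ω {a} ∩ {z} = ∅ ↔ ¬ G.Conn ω a z := by
  rw [← mem_cluster_single]
  constructor
  · intro h hz
    rw [Set.eq_empty_iff_forall_notMem] at h
    exact h z ⟨hz, rfl⟩
  · intro h
    rw [Set.eq_empty_iff_forall_notMem]
    rintro u ⟨hu, rfl⟩
    exact h hu

lemma LA (hG : G.ProbValid) (a z u w : V) :
    G.prob {ω | G.Conn ω a u ∧ ¬ G.Conn ω a z} *
      G.prob {ω | G.Conn ω a w ∧ ¬ G.Conn ω a z} ≤
    G.prob {ω | (G.Conn ω a u ∧ G.Conn ω a w) ∧ ¬ G.Conn ω a z} *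
      G.prob {ω | ¬ G.Conn ω a z} := by
  have h := G.cpa_all hG {a} {z} {T | u ∈ T} {T | w ∈ T} (upFam_mem u) (upFam_mem w)
  have e1 : G.Q {a} {z} {T | u ∈ T} = G.prob {ω | G.Conn ω a u ∧ ¬ G.Conn ω a z} := by
    unfold Q
    apply congrArg
    ext ω
    simp only [Set.mem_setOf_eq, G.mem_cluster_single, G.avoid_cluster_single]
  have e2 : G.Q {a} {z} {T | w ∈ T} = G.prob {ω | G.Conn ω a w ∧ ¬ G.Conn ω a z} := by
    unfold Q
    apply congrArg
    ext ω
    simp only [Set.mem_setOf_eq, G.mem_cluster_single, G.avoid_cluster_single]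
  have e3 : G.Q {a} {z} ({T | u ∈ T} ∩ {T | w ∈ T})
      = G.prob {ω | (G.Conn ω a u ∧ G.Conn ω a w) ∧ ¬ G.Conn ω a z} := by
    unfold Q
    apply congrArg
    ext ω
    simp only [Set.mem_setOf_eq, Set.mem_inter_iff, G.mem_cluster_single,
      G.avoid_cluster_single]
  have e4 : G.Q {a} {z} Set.univ = G.prob {ω | ¬ G.Conn ω a z} := by
    unfold Q
    apply congrArg
    ext ω
    simp only [Set.mem_setOf_eq, Set.mem_univ, true_and, G.avoid_cluster_single]
  rw [e1, e2, e3, e4] at h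
  exact h

lemma LB (hG : G.ProbValid) (a₁ a₂ u w : V) :
    G.prob {ω | G.Conn ω a₁ u ∧ G.Conn ω a₂ w ∧ ¬ G.Conn ω a₁ a₂} *
      G.prob {ω | ¬ G.Conn ω a₁ a₂} ≤
    G.prob {ω | G.Conn ω a₁ u ∧ ¬ G.Conn ω a₁ a₂} *
      G.prob {ω | G.Conn ω a₂ w ∧ ¬ G.Conn ω a₁ a₂} := by
  have h := G.na_all hG {a₁} {a₂} {T | u ∈ T} {T | w ∈ T} (upFam_mem u) (upFam_mem w)
  have e1 : G.NQ {a₁} {a₂} {T | u ∈ T} {T | w ∈ T}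
      = G.prob {ω | G.Conn ω a₁ u ∧ G.Conn ω a₂ w ∧ ¬ G.Conn ω a₁ a₂} := by
    unfold NQ
    apply congrArg
    ext ω
    simp only [Set.mem_setOf_eq, G.mem_cluster_single, G.avoid_cluster_single]
  have e2 : G.NQ {a₁} {a₂} {T | u ∈ T} Set.univ
      = G.prob {ω | G.Conn ω a₁ u ∧ ¬ G.Conn ω a₁ a₂} := by
    unfold NQ
    apply congrArg
    ext ω
    simp only [Set.mem_setOf_eq, Set.mem_univ, true_and, G.mem_cluster_single,
      G.avoid_cluster_single]
  have e3 : G.NQ {a₁} {a₂} Set.univ {T | w ∈ T}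
      = G.prob {ω | G.Conn ω a₂ w ∧ ¬ G.Conn ω a₁ a₂} := by
    unfold NQ
    apply congrArg
    ext ω
    simp only [Set.mem_setOf_eq, Set.mem_univ, true_and, G.mem_cluster_single,
      G.avoid_cluster_single]
  have e4 : G.NQ {a₁} {a₂} Set.univ Set.univ = G.prob {ω | ¬ G.Conn ω a₁ a₂} := by
    unfold NQ
    apply congrArg
    ext ω
    simp only [Set.mem_setOf_eq, Set.mem_univ, true_and, G.avoid_cluster_single]
  rw [e1, e2, e3, e4] at h
  exact h

end Translate

end PercGraph

set_option maxHeartbeats 4000000 in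
open PercGraph in
/-- pre-FKG inequality for `|A| = 2` with explicit convex coefficients
`α = φ(1)/(φ(1)+φ(2))`, `β = φ(2)/(φ(1)+φ(2))`, where `φ(i) = P(0↔aᵢ | a₁↮a₂)`. -/
theorem A2_coefficients
    {V E : Type} [DecidableEq V] [Fintype E] [DecidableEq E]
    (G : PercGraph V E) (hp : G.ProbValid) (x₀ a₁ a₂ : V)
    (φ1 φ2 : ℝ)
    (hφ1 : φ1 = G.condProb (G.connTo x₀ {a₁}) (G.disconn {a₁} {a₂}))
    (hφ2 : φ2 = G.condProb (G.connTo x₀ {a₂}) (G.disconn {a₁} {a₂}))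
    (hpos : 0 < φ1 + φ2) (b : V) :
    (φ1 / (φ1 + φ2)) * G.prob (G.connTo x₀ {a₁, a₂} ∩ G.connEvent a₁ b) +
        (φ2 / (φ1 + φ2)) * G.prob (G.connTo x₀ {a₁, a₂} ∩ G.connEvent a₂ b)
      ≤ G.prob (G.connEvent x₀ b ∩ G.connTo x₀ {a₁, a₂}) := by
  classical
  -- basic sets
  have hDeq : G.disconn {a₁} {a₂} = {ω | ¬ G.Conn ω a₁ a₂} := by
    ext ω
    simp [PercGraph.disconn]
  -- identify φ's
  have hφ1' : φ1 = G.prob {ω | G.Conn ω a₁ x₀ ∧ ¬ G.Conn ω a₁ a₂}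
      / G.prob {ω | ¬ G.Conn ω a₁ a₂} := by
    rw [hφ1]
    simp only [PercGraph.condProb, hDeq]
    congr 1
    apply congrArg
    ext ω
    simp only [PercGraph.connTo, Set.mem_inter_iff, Set.mem_setOf_eq]
    constructor
    · rintro ⟨⟨a, ha, hc⟩, hd⟩
      rcases ha with rfl
      exact ⟨G.conn_symm hc, hd⟩
    · rintro ⟨hc, hd⟩
      exact ⟨⟨a₁, rfl, G.conn_symm hc⟩, hd⟩
  have hφ2' : φ2 = G.prob {ω | G.Conn ω a₂ x₀ ∧ ¬ G.Conn ω a₁ a₂}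
      / G.prob {ω | ¬ G.Conn ω a₁ a₂} := by
    rw [hφ2]
    simp only [PercGraph.condProb, hDeq]
    congr 1
    apply congrArg
    ext ω
    simp only [PercGraph.connTo, Set.mem_inter_iff, Set.mem_setOf_eq]
    constructor
    · rintro ⟨⟨a, ha, hc⟩, hd⟩
      rcases ha with rfl
      exact ⟨G.conn_symm hc, hd⟩
    · rintro ⟨hc, hd⟩
      exact ⟨⟨a₂, rfl, G.conn_symm hc⟩, hd⟩
  have hPDnn : 0 ≤ G.prob {ω | ¬ G.Conn ω a₁ a₂} := G.prob_nonneg hp _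
  have hPD0 : G.prob {ω | ¬ G.Conn ω a₁ a₂} ≠ 0 := by
    intro h0
    rw [hφ1', hφ2', h0, div_zero, div_zero] at hpos
    simp at hpos
  have hPDpos : 0 < G.prob {ω | ¬ G.Conn ω a₁ a₂} := lt_of_le_of_ne hPDnn (Ne.symm hPD0)
  have hp1nn : 0 ≤ G.prob {ω | G.Conn ω a₁ x₀ ∧ ¬ G.Conn ω a₁ a₂} := G.prob_nonneg hp _
  have hp2nn : 0 ≤ G.prob {ω | G.Conn ω a₂ x₀ ∧ ¬ G.Conn ω a₁ a₂} := G.prob_nonneg hp _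
  have hsum : φ1 + φ2 = (G.prob {ω | G.Conn ω a₁ x₀ ∧ ¬ G.Conn ω a₁ a₂}
      + G.prob {ω | G.Conn ω a₂ x₀ ∧ ¬ G.Conn ω a₁ a₂})
      / G.prob {ω | ¬ G.Conn ω a₁ a₂} := by
    rw [hφ1', hφ2', ← add_div]
  have hTpos : 0 < G.prob {ω | G.Conn ω a₁ x₀ ∧ ¬ G.Conn ω a₁ a₂}
      + G.prob {ω | G.Conn ω a₂ x₀ ∧ ¬ G.Conn ω a₁ a₂} := by
    have h1 : 0 < (G.prob {ω | G.Conn ω a₁ x₀ ∧ ¬ G.Conn ω a₁ a₂}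
        + G.prob {ω | G.Conn ω a₂ x₀ ∧ ¬ G.Conn ω a₁ a₂})
        / G.prob {ω | ¬ G.Conn ω a₁ a₂} := hsum ▸ hpos
    by_contra hc
    push_neg at hc
    have : (G.prob {ω | G.Conn ω a₁ x₀ ∧ ¬ G.Conn ω a₁ a₂}
        + G.prob {ω | G.Conn ω a₂ x₀ ∧ ¬ G.Conn ω a₁ a₂})
        / G.prob {ω | ¬ G.Conn ω a₁ a₂} ≤ 0 :=
      div_nonpos_of_nonpos_of_nonneg hc hPDnn
    linarith
  have hT0 : G.prob {ω | G.Conn ω a₁ x₀ ∧ ¬ G.Conn ω a₁ a₂}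
      + G.prob {ω | G.Conn ω a₂ x₀ ∧ ¬ G.Conn ω a₁ a₂} ≠ 0 := ne_of_gt hTpos
  -- the two correlation inequalities, symmetrized
  have LA1 := G.LA hp a₁ a₂ x₀ b
  have LB1 := G.LB hp a₁ a₂ b x₀
  -- versions with the roles of a₁, a₂ exchanged; we must flip ¬Conn a₂ a₁ into ¬Conn a₁ a₂
  have hflip : ∀ X Y : (E → Bool) → Prop,
      G.prob {ω | X ω ∧ ¬ G.Conn ω a₂ a₁} = G.prob {ω | X ω ∧ ¬ G.Conn ω a₁ a₂} := by
    intro X Y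
    apply congrArg
    ext ω
    simp only [Set.mem_setOf_eq]
    constructor
    · rintro ⟨h1, h2⟩
      exact ⟨h1, fun hc => h2 (G.conn_symm hc)⟩
    · rintro ⟨h1, h2⟩
      exact ⟨h1, fun hc => h2 (G.conn_symm hc)⟩
  have hflipD : G.prob {ω | ¬ G.Conn ω a₂ a₁} = G.prob {ω | ¬ G.Conn ω a₁ a₂} := by
    apply congrArg
    ext ω
    simp only [Set.mem_setOf_eq]
    constructor
    · exact fun h hc => h (G.conn_symm hc)
    · exact fun h hc => h (G.conn_symm hc)
  have LA2 := G.LA hp a₂ a₁ x₀ b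
  rw [hflip (fun ω => G.Conn ω a₂ x₀) (fun _ => True),
    hflip (fun ω => G.Conn ω a₂ b) (fun _ => True),
    hflip (fun ω => G.Conn ω a₂ x₀ ∧ G.Conn ω a₂ b) (fun _ => True), hflipD] at LA2
  have hflip3 : ∀ X Y : (E → Bool) → Prop,
      G.prob {ω | X ω ∧ Y ω ∧ ¬ G.Conn ω a₂ a₁}
        = G.prob {ω | X ω ∧ Y ω ∧ ¬ G.Conn ω a₁ a₂} := by
    intro X Y
    apply congrArg
    ext ω
    simp only [Set.mem_setOf_eq]
    constructor
    · rintro ⟨h1, h2, h3⟩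
      exact ⟨h1, h2, fun hc => h3 (G.conn_symm hc)⟩
    · rintro ⟨h1, h2, h3⟩
      exact ⟨h1, h2, fun hc => h3 (G.conn_symm hc)⟩
  have LB2 := G.LB hp a₂ a₁ b x₀
  rw [hflip3 (fun ω => G.Conn ω a₂ b) (fun ω => G.Conn ω a₁ x₀),
    hflip (fun ω => G.Conn ω a₂ b) (fun _ => True),
    hflip (fun ω => G.Conn ω a₁ x₀) (fun _ => True), hflipD] at LB2
  -- monotone comparisons
  have m1 : G.prob {ω | (G.Conn ω a₁ x₀ ∧ G.Conn ω a₁ b) ∧ ¬ G.Conn ω a₁ a₂}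
      ≤ G.prob {ω | G.Conn ω x₀ b ∧ G.Conn ω a₁ x₀ ∧ ¬ G.Conn ω a₁ a₂} := by
    apply G.prob_mono hp
    rintro ω ⟨⟨h1, h2⟩, h3⟩
    exact ⟨G.conn_trans (G.conn_symm h1) h2, h1, h3⟩
  have m2 : G.prob {ω | (G.Conn ω a₂ x₀ ∧ G.Conn ω a₂ b) ∧ ¬ G.Conn ω a₁ a₂}
      ≤ G.prob {ω | G.Conn ω x₀ b ∧ G.Conn ω a₂ x₀ ∧ ¬ G.Conn ω a₁ a₂} := by
    apply G.prob_mono hp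
    rintro ω ⟨⟨h1, h2⟩, h3⟩
    exact ⟨G.conn_trans (G.conn_symm h1) h2, h1, h3⟩
  -- cross inequalities
  have X1 : G.prob {ω | G.Conn ω a₁ x₀ ∧ ¬ G.Conn ω a₁ a₂}
      * G.prob {ω | G.Conn ω a₁ b ∧ G.Conn ω a₂ x₀ ∧ ¬ G.Conn ω a₁ a₂}
      ≤ G.prob {ω | G.Conn ω a₂ x₀ ∧ ¬ G.Conn ω a₁ a₂}
      * G.prob {ω | G.Conn ω x₀ b ∧ G.Conn ω a₁ x₀ ∧ ¬ G.Conn ω a₁ a₂} := by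
    have hchain : G.prob {ω | G.Conn ω a₁ x₀ ∧ ¬ G.Conn ω a₁ a₂}
        * G.prob {ω | G.Conn ω a₁ b ∧ G.Conn ω a₂ x₀ ∧ ¬ G.Conn ω a₁ a₂}
        * G.prob {ω | ¬ G.Conn ω a₁ a₂}
        ≤ G.prob {ω | G.Conn ω a₂ x₀ ∧ ¬ G.Conn ω a₁ a₂}
        * G.prob {ω | G.Conn ω x₀ b ∧ G.Conn ω a₁ x₀ ∧ ¬ G.Conn ω a₁ a₂}
        * G.prob {ω | ¬ G.Conn ω a₁ a₂} := by
      calc G.prob {ω | G.Conn ω a₁ x₀ ∧ ¬ G.Conn ω a₁ a₂}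
            * G.prob {ω | G.Conn ω a₁ b ∧ G.Conn ω a₂ x₀ ∧ ¬ G.Conn ω a₁ a₂}
            * G.prob {ω | ¬ G.Conn ω a₁ a₂}
          = G.prob {ω | G.Conn ω a₁ x₀ ∧ ¬ G.Conn ω a₁ a₂}
            * (G.prob {ω | G.Conn ω a₁ b ∧ G.Conn ω a₂ x₀ ∧ ¬ G.Conn ω a₁ a₂}
              * G.prob {ω | ¬ G.Conn ω a₁ a₂}) := by ring
        _ ≤ G.prob {ω | G.Conn ω a₁ x₀ ∧ ¬ G.Conn ω a₁ a₂}
            * (G.prob {ω | G.Conn ω a₁ b ∧ ¬ G.Conn ω a₁ a₂}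
              * G.prob {ω | G.Conn ω a₂ x₀ ∧ ¬ G.Conn ω a₁ a₂}) :=
            mul_le_mul_of_nonneg_left LB1 hp1nn
        _ = G.prob {ω | G.Conn ω a₂ x₀ ∧ ¬ G.Conn ω a₁ a₂}
            * (G.prob {ω | G.Conn ω a₁ x₀ ∧ ¬ G.Conn ω a₁ a₂}
              * G.prob {ω | G.Conn ω a₁ b ∧ ¬ G.Conn ω a₁ a₂}) := by ring
        _ ≤ G.prob {ω | G.Conn ω a₂ x₀ ∧ ¬ G.Conn ω a₁ a₂}
            * (G.prob {ω | (G.Conn ω a₁ x₀ ∧ G.Conn ω a₁ b) ∧ ¬ G.Conn ω a₁ a₂}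
              * G.prob {ω | ¬ G.Conn ω a₁ a₂}) :=
            mul_le_mul_of_nonneg_left LA1 hp2nn
        _ ≤ G.prob {ω | G.Conn ω a₂ x₀ ∧ ¬ G.Conn ω a₁ a₂}
            * (G.prob {ω | G.Conn ω x₀ b ∧ G.Conn ω a₁ x₀ ∧ ¬ G.Conn ω a₁ a₂}
              * G.prob {ω | ¬ G.Conn ω a₁ a₂}) :=
            mul_le_mul_of_nonneg_left (mul_le_mul_of_nonneg_right m1 hPDnn) hp2nn
        _ = G.prob {ω | G.Conn ω a₂ x₀ ∧ ¬ G.Conn ω a₁ a₂}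
            * G.prob {ω | G.Conn ω x₀ b ∧ G.Conn ω a₁ x₀ ∧ ¬ G.Conn ω a₁ a₂}
            * G.prob {ω | ¬ G.Conn ω a₁ a₂} := by ring
    exact le_of_mul_le_mul_right hchain hPDpos
  have X2 : G.prob {ω | G.Conn ω a₂ x₀ ∧ ¬ G.Conn ω a₁ a₂}
      * G.prob {ω | G.Conn ω a₂ b ∧ G.Conn ω a₁ x₀ ∧ ¬ G.Conn ω a₁ a₂}
      ≤ G.prob {ω | G.Conn ω a₁ x₀ ∧ ¬ G.Conn ω a₁ a₂}
      * G.prob {ω | G.Conn ω x₀ b ∧ G.Conn ω a₂ x₀ ∧ ¬ G.Conn ω a₁ a₂} := by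
    have hchain : G.prob {ω | G.Conn ω a₂ x₀ ∧ ¬ G.Conn ω a₁ a₂}
        * G.prob {ω | G.Conn ω a₂ b ∧ G.Conn ω a₁ x₀ ∧ ¬ G.Conn ω a₁ a₂}
        * G.prob {ω | ¬ G.Conn ω a₁ a₂}
        ≤ G.prob {ω | G.Conn ω a₁ x₀ ∧ ¬ G.Conn ω a₁ a₂}
        * G.prob {ω | G.Conn ω x₀ b ∧ G.Conn ω a₂ x₀ ∧ ¬ G.Conn ω a₁ a₂}
        * G.prob {ω | ¬ G.Conn ω a₁ a₂} := by
      calc G.prob {ω | G.Conn ω a₂ x₀ ∧ ¬ G.Conn ω a₁ a₂}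
            * G.prob {ω | G.Conn ω a₂ b ∧ G.Conn ω a₁ x₀ ∧ ¬ G.Conn ω a₁ a₂}
            * G.prob {ω | ¬ G.Conn ω a₁ a₂}
          = G.prob {ω | G.Conn ω a₂ x₀ ∧ ¬ G.Conn ω a₁ a₂}
            * (G.prob {ω | G.Conn ω a₂ b ∧ G.Conn ω a₁ x₀ ∧ ¬ G.Conn ω a₁ a₂}
              * G.prob {ω | ¬ G.Conn ω a₁ a₂}) := by ring
        _ ≤ G.prob {ω | G.Conn ω a₂ x₀ ∧ ¬ G.Conn ω a₁ a₂}
            * (G.prob {ω | G.Conn ω a₂ b ∧ ¬ G.Conn ω a₁ a₂}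
              * G.prob {ω | G.Conn ω a₁ x₀ ∧ ¬ G.Conn ω a₁ a₂}) :=
            mul_le_mul_of_nonneg_left LB2 hp2nn
        _ = G.prob {ω | G.Conn ω a₁ x₀ ∧ ¬ G.Conn ω a₁ a₂}
            * (G.prob {ω | G.Conn ω a₂ x₀ ∧ ¬ G.Conn ω a₁ a₂}
              * G.prob {ω | G.Conn ω a₂ b ∧ ¬ G.Conn ω a₁ a₂}) := by ring
        _ ≤ G.prob {ω | G.Conn ω a₁ x₀ ∧ ¬ G.Conn ω a₁ a₂}
            * (G.prob {ω | (G.Conn ω a₂ x₀ ∧ G.Conn ω a₂ b) ∧ ¬ G.Conn ω a₁ a₂}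
              * G.prob {ω | ¬ G.Conn ω a₁ a₂}) :=
            mul_le_mul_of_nonneg_left LA2 hp1nn
        _ ≤ G.prob {ω | G.Conn ω a₁ x₀ ∧ ¬ G.Conn ω a₁ a₂}
            * (G.prob {ω | G.Conn ω x₀ b ∧ G.Conn ω a₂ x₀ ∧ ¬ G.Conn ω a₁ a₂}
              * G.prob {ω | ¬ G.Conn ω a₁ a₂}) :=
            mul_le_mul_of_nonneg_left (mul_le_mul_of_nonneg_right m2 hPDnn) hp1nn
        _ = G.prob {ω | G.Conn ω a₁ x₀ ∧ ¬ G.Conn ω a₁ a₂}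
            * G.prob {ω | G.Conn ω x₀ b ∧ G.Conn ω a₂ x₀ ∧ ¬ G.Conn ω a₁ a₂}
            * G.prob {ω | ¬ G.Conn ω a₁ a₂} := by ring
    exact le_of_mul_le_mul_right hchain hPDpos
  -- splits of the three event probabilities
  have split1 : G.prob (G.connTo x₀ {a₁, a₂} ∩ G.connEvent a₁ b)
      = G.prob {ω | (G.Conn ω a₁ x₀ ∧ G.Conn ω a₁ b) ∧ ¬ G.Conn ω a₁ a₂}
        + G.prob {ω | G.Conn ω a₁ b ∧ G.Conn ω a₂ x₀ ∧ ¬ G.Conn ω a₁ a₂}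
        + G.prob ((G.connTo x₀ {a₁, a₂} ∩ G.connEvent a₁ b) \ {ω | ¬ G.Conn ω a₁ a₂}) := by
    rw [G.prob_split (G.connTo x₀ {a₁, a₂} ∩ G.connEvent a₁ b) {ω | ¬ G.Conn ω a₁ a₂}]
    rw [G.prob_split (G.connTo x₀ {a₁, a₂} ∩ G.connEvent a₁ b ∩ {ω | ¬ G.Conn ω a₁ a₂})
      {ω | G.Conn ω a₁ x₀}]
    congr 2
    · apply congrArg
      ext ω
      simp only [Set.mem_inter_iff, Set.mem_setOf_eq, PercGraph.connTo,
        PercGraph.connEvent, Set.mem_insert_iff, Set.mem_singleton_iff]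
      constructor
      · rintro ⟨⟨⟨-, hb⟩, hd⟩, hc1⟩
        exact ⟨⟨hc1, hb⟩, hd⟩
      · rintro ⟨⟨hc1, hb⟩, hd⟩
        exact ⟨⟨⟨⟨a₁, Or.inl rfl, G.conn_symm hc1⟩, hb⟩, hd⟩, hc1⟩
    · apply congrArg
      ext ω
      simp only [Set.mem_diff, Set.mem_inter_iff, Set.mem_setOf_eq, PercGraph.connTo,
        PercGraph.connEvent, Set.mem_insert_iff, Set.mem_singleton_iff]
      constructor
      · rintro ⟨⟨⟨⟨a, ha, hc⟩, hb⟩, hd⟩, hc1⟩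
        rcases ha with rfl | rfl
        · exact absurd (G.conn_symm hc) hc1
        · exact ⟨hb, G.conn_symm hc, hd⟩
      · rintro ⟨hb, hc2, hd⟩
        refine ⟨⟨⟨⟨a₂, Or.inr rfl, G.conn_symm hc2⟩, hb⟩, hd⟩, ?_⟩
        intro hc1
        exact hd (G.conn_trans hc1 (G.conn_symm hc2))
  have split2 : G.prob (G.connTo x₀ {a₁, a₂} ∩ G.connEvent a₂ b)
      = G.prob {ω | (G.Conn ω a₂ x₀ ∧ G.Conn ω a₂ b) ∧ ¬ G.Conn ω a₁ a₂}
        + G.prob {ω | G.Conn ω a₂ b ∧ G.Conn ω a₁ x₀ ∧ ¬ G.Conn ω a₁ a₂}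
        + G.prob ((G.connTo x₀ {a₁, a₂} ∩ G.connEvent a₂ b) \ {ω | ¬ G.Conn ω a₁ a₂}) := by
    rw [G.prob_split (G.connTo x₀ {a₁, a₂} ∩ G.connEvent a₂ b) {ω | ¬ G.Conn ω a₁ a₂}]
    rw [G.prob_split (G.connTo x₀ {a₁, a₂} ∩ G.connEvent a₂ b ∩ {ω | ¬ G.Conn ω a₁ a₂})
      {ω | G.Conn ω a₂ x₀}]
    congr 2
    · apply congrArg
      ext ω
      simp only [Set.mem_inter_iff, Set.mem_setOf_eq, PercGraph.connTo,
        PercGraph.connEvent, Set.mem_insert_iff, Set.mem_singleton_iff]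
      constructor
      · rintro ⟨⟨⟨-, hb⟩, hd⟩, hc2⟩
        exact ⟨⟨hc2, hb⟩, hd⟩
      · rintro ⟨⟨hc2, hb⟩, hd⟩
        exact ⟨⟨⟨⟨a₂, Or.inr rfl, G.conn_symm hc2⟩, hb⟩, hd⟩, hc2⟩
    · apply congrArg
      ext ω
      simp only [Set.mem_diff, Set.mem_inter_iff, Set.mem_setOf_eq, PercGraph.connTo,
        PercGraph.connEvent, Set.mem_insert_iff, Set.mem_singleton_iff]
      constructor
      · rintro ⟨⟨⟨⟨a, ha, hc⟩, hb⟩, hd⟩, hc2⟩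
        rcases ha with rfl | rfl
        · exact ⟨hb, G.conn_symm hc, hd⟩
        · exact absurd (G.conn_symm hc) hc2
      · rintro ⟨hb, hc1, hd⟩
        refine ⟨⟨⟨⟨a₁, Or.inl rfl, G.conn_symm hc1⟩, hb⟩, hd⟩, ?_⟩
        intro hc2
        exact hd (G.conn_trans hc1 (G.conn_symm hc2))
  have split3 : G.prob (G.connEvent x₀ b ∩ G.connTo x₀ {a₁, a₂})
      = G.prob {ω | G.Conn ω x₀ b ∧ G.Conn ω a₁ x₀ ∧ ¬ G.Conn ω a₁ a₂}
        + G.prob {ω | G.Conn ω x₀ b ∧ G.Conn ω a₂ x₀ ∧ ¬ G.Conn ω a₁ a₂}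
        + G.prob ((G.connEvent x₀ b ∩ G.connTo x₀ {a₁, a₂}) \ {ω | ¬ G.Conn ω a₁ a₂}) := by
    rw [G.prob_split (G.connEvent x₀ b ∩ G.connTo x₀ {a₁, a₂}) {ω | ¬ G.Conn ω a₁ a₂}]
    rw [G.prob_split (G.connEvent x₀ b ∩ G.connTo x₀ {a₁, a₂} ∩ {ω | ¬ G.Conn ω a₁ a₂})
      {ω | G.Conn ω a₁ x₀}]
    congr 2
    · apply congrArg
      ext ω
      simp only [Set.mem_inter_iff, Set.mem_setOf_eq, PercGraph.connTo,
        PercGraph.connEvent, Set.mem_insert_iff, Set.mem_singleton_iff]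
      constructor
      · rintro ⟨⟨⟨hb, -⟩, hd⟩, hc1⟩
        exact ⟨hb, hc1, hd⟩
      · rintro ⟨hb, hc1, hd⟩
        exact ⟨⟨⟨hb, ⟨a₁, Or.inl rfl, G.conn_symm hc1⟩⟩, hd⟩, hc1⟩
    · apply congrArg
      ext ω
      simp only [Set.mem_diff, Set.mem_inter_iff, Set.mem_setOf_eq, PercGraph.connTo,
        PercGraph.connEvent, Set.mem_insert_iff, Set.mem_singleton_iff]
      constructor
      · rintro ⟨⟨⟨hb, ⟨a, ha, hc⟩⟩, hd⟩, hc1⟩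
        rcases ha with rfl | rfl
        · exact absurd (G.conn_symm hc) hc1
        · exact ⟨hb, G.conn_symm hc, hd⟩
      · rintro ⟨hb, hc2, hd⟩
        refine ⟨⟨⟨hb, ⟨a₂, Or.inr rfl, G.conn_symm hc2⟩⟩, hd⟩, ?_⟩
        intro hc1
        exact hd (G.conn_trans hc1 (G.conn_symm hc2))
  -- remainder comparisons off the disconnection event
  have m5 : G.prob ((G.connTo x₀ {a₁, a₂} ∩ G.connEvent a₁ b) \ {ω | ¬ G.Conn ω a₁ a₂})
      ≤ G.prob ((G.connEvent x₀ b ∩ G.connTo x₀ {a₁, a₂}) \ {ω | ¬ G.Conn ω a₁ a₂}) := by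
    apply G.prob_mono hp
    rintro ω ⟨⟨hEA, hb⟩, hnd⟩
    have hconn : G.Conn ω a₁ a₂ := not_not.mp hnd
    refine ⟨⟨?_, hEA⟩, hnd⟩
    obtain ⟨a, ha, hc⟩ := hEA
    rcases ha with rfl | rfl
    · exact G.conn_trans hc hb
    · exact G.conn_trans hc (G.conn_trans (G.conn_symm hconn) hb)
  have m6 : G.prob ((G.connTo x₀ {a₁, a₂} ∩ G.connEvent a₂ b) \ {ω | ¬ G.Conn ω a₁ a₂})
      ≤ G.prob ((G.connEvent x₀ b ∩ G.connTo x₀ {a₁, a₂}) \ {ω | ¬ G.Conn ω a₁ a₂}) := by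
    apply G.prob_mono hp
    rintro ω ⟨⟨hEA, hb⟩, hnd⟩
    have hconn : G.Conn ω a₁ a₂ := not_not.mp hnd
    refine ⟨⟨?_, hEA⟩, hnd⟩
    obtain ⟨a, ha, hc⟩ := hEA
    rcases ha with rfl | rfl
    · exact G.conn_trans hc (G.conn_trans hconn hb)
    · exact G.conn_trans hc hb
  -- final assembly
  have hα : φ1 / (φ1 + φ2) = G.prob {ω | G.Conn ω a₁ x₀ ∧ ¬ G.Conn ω a₁ a₂}
      / (G.prob {ω | G.Conn ω a₁ x₀ ∧ ¬ G.Conn ω a₁ a₂}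
        + G.prob {ω | G.Conn ω a₂ x₀ ∧ ¬ G.Conn ω a₁ a₂}) := by
    rw [hsum, hφ1']
    rw [div_div_div_cancel_right₀ hPD0]
  have hβ : φ2 / (φ1 + φ2) = G.prob {ω | G.Conn ω a₂ x₀ ∧ ¬ G.Conn ω a₁ a₂}
      / (G.prob {ω | G.Conn ω a₁ x₀ ∧ ¬ G.Conn ω a₁ a₂}
        + G.prob {ω | G.Conn ω a₂ x₀ ∧ ¬ G.Conn ω a₁ a₂}) := by
    rw [hsum, hφ2']
    rw [div_div_div_cancel_right₀ hPD0]
  rw [hα, hβ, div_mul_eq_mul_div, div_mul_eq_mul_div, ← add_div, div_le_iff₀ hTpos]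
  rw [split1, split2, split3]
  have i1 : G.prob {ω | G.Conn ω a₁ x₀ ∧ ¬ G.Conn ω a₁ a₂}
      * G.prob {ω | (G.Conn ω a₁ x₀ ∧ G.Conn ω a₁ b) ∧ ¬ G.Conn ω a₁ a₂}
      ≤ G.prob {ω | G.Conn ω a₁ x₀ ∧ ¬ G.Conn ω a₁ a₂}
      * G.prob {ω | G.Conn ω x₀ b ∧ G.Conn ω a₁ x₀ ∧ ¬ G.Conn ω a₁ a₂} :=
    mul_le_mul_of_nonneg_left m1 hp1nn
  have i3 : G.prob {ω | G.Conn ω a₂ x₀ ∧ ¬ G.Conn ω a₁ a₂}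
      * G.prob {ω | (G.Conn ω a₂ x₀ ∧ G.Conn ω a₂ b) ∧ ¬ G.Conn ω a₁ a₂}
      ≤ G.prob {ω | G.Conn ω a₂ x₀ ∧ ¬ G.Conn ω a₁ a₂}
      * G.prob {ω | G.Conn ω x₀ b ∧ G.Conn ω a₂ x₀ ∧ ¬ G.Conn ω a₁ a₂} :=
    mul_le_mul_of_nonneg_left m2 hp2nn
  have i5 : G.prob {ω | G.Conn ω a₁ x₀ ∧ ¬ G.Conn ω a₁ a₂}
      * G.prob ((G.connTo x₀ {a₁, a₂} ∩ G.connEvent a₁ b) \ {ω | ¬ G.Conn ω a₁ a₂})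
      ≤ G.prob {ω | G.Conn ω a₁ x₀ ∧ ¬ G.Conn ω a₁ a₂}
      * G.prob ((G.connEvent x₀ b ∩ G.connTo x₀ {a₁, a₂}) \ {ω | ¬ G.Conn ω a₁ a₂}) :=
    mul_le_mul_of_nonneg_left m5 hp1nn
  have i6 : G.prob {ω | G.Conn ω a₂ x₀ ∧ ¬ G.Conn ω a₁ a₂}
      * G.prob ((G.connTo x₀ {a₁, a₂} ∩ G.connEvent a₂ b) \ {ω | ¬ G.Conn ω a₁ a₂})
      ≤ G.prob {ω | G.Conn ω a₂ x₀ ∧ ¬ G.Conn ω a₁ a₂}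
      * G.prob ((G.connEvent x₀ b ∩ G.connTo x₀ {a₁, a₂}) \ {ω | ¬ G.Conn ω a₁ a₂}) :=
    mul_le_mul_of_nonneg_left m6 hp2nn
  nlinarith [i1, i3, i5, i6, X1, X2]
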